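/- arXiv:2006.11028 — 13 statements merged into one kernel-verified Lean document; each statement's English description precedes it below -/
import Mathlib

section
/- Let d : ℝ → ℝ be any function, let n, m, k be positive integers, let f : Ω₁ → ℝ^m be Fréchet differentiable on a nonempty open set Ω₁ ⊆ ℝ^n with f(Ω₁) open, and let g : Ω₂ → ℝ^k be Fréchet differentiable on a nonempty open set Ω₂ ⊆ ℝ^m. If d is a derivation with respect to f and with respect to g ∘ f (on {x ∈ Ω₁ : f(x) ∈ Ω₂}), then d is a derivation with respect to g on the set f(Ω₁) ∩ Ω₂, i.e., d(g(y)) = g'(y) d(y) holds for all y ∈ f(Ω₁) ∩ Ω₂. -/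
theorem stmt_1_general (d : ℝ → ℝ) (n m k : ℕ)
    (Ω₁ : Set (Fin n → ℝ)) (Ω₂ : Set (Fin m → ℝ))
    (f : (Fin n → ℝ) → Fin m → ℝ) (g : (Fin m → ℝ) → Fin k → ℝ)
    (hf : ∀ x ∈ Ω₁, DifferentiableAt ℝ f x)
    (hg : ∀ y ∈ Ω₂, DifferentiableAt ℝ g y)
    (hdf : ∀ x ∈ Ω₁, (fun j => d (f x j)) = fderiv ℝ f x (fun i => d (x i)))
    (hdgf : ∀ x ∈ Ω₁, f x ∈ Ω₂ →
      (fun j => d (g (f x) j)) = fderiv ℝ (g ∘ f) x (fun i => d (x i))) :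
    ∀ y ∈ f '' Ω₁ ∩ Ω₂,
      (fun j => d (g y j)) = fderiv ℝ g y (fun i => d (y i)) := by
  rintro _ ⟨⟨x, hx, rfl⟩, hy⟩
  rw [hdgf x hx hy, fderiv_comp x (hg _ hy) (hf x hx), ContinuousLinearMap.comp_apply, ← hdf x hx]

/-- If `d` is a derivation with respect to `f` (whose image is open) and with respect to
`g ∘ f`, then `d` is a derivation with respect to `g` on `f(Ω₁) ∩ Ω₂`. -/
theorem stmt_1 (d : ℝ → ℝ) (n m k : ℕ) (hn : 0 < n) (hm : 0 < m) (hk : 0 < k)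
    (Ω₁ : Set (Fin n → ℝ)) (Ω₂ : Set (Fin m → ℝ))
    (hΩ₁open : IsOpen Ω₁) (hΩ₁ne : Ω₁.Nonempty)
    (hΩ₂open : IsOpen Ω₂) (hΩ₂ne : Ω₂.Nonempty)
    (f : (Fin n → ℝ) → Fin m → ℝ) (g : (Fin m → ℝ) → Fin k → ℝ)
    (hf : ∀ x ∈ Ω₁, DifferentiableAt ℝ f x)
    (hg : ∀ y ∈ Ω₂, DifferentiableAt ℝ g y)
    (hfΩ₁ : IsOpen (f '' Ω₁))
    (hdf : ∀ x ∈ Ω₁, (fun j => d (f x j)) = fderiv ℝ f x (fun i => d (x i)))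
    (hdgf : ∀ x ∈ Ω₁, f x ∈ Ω₂ →
      (fun j => d (g (f x) j)) = fderiv ℝ (g ∘ f) x (fun i => d (x i))) :
    ∀ y ∈ f '' Ω₁ ∩ Ω₂,
      (fun j => d (g y j)) = fderiv ℝ g y (fun i => d (y i)) :=
  stmt_1_general d n m k Ω₁ Ω₂ f g hf hg hdf hdgf
end

section
/- Let d : ℝ → ℝ be any function, let n be a positive integer, and let f : Ω → ℝ^n be a Fréchet differentiable injective function on a nonempty open set Ω ⊆ ℝ^n whose derivative f' is continuous and nowhere singular (so that f has a differentiable inverse f⁻¹ on the open set f(Ω)). If d is a derivation with respect to f, then d is a derivation with respect to f⁻¹, i.e., d(f⁻¹(y)) = (f⁻¹)'(y) d(y) for all y ∈ f(Ω). -/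
open Filter Topology

section

variable {𝕜 : Type*} [RCLike 𝕜] {E F : Type*} [NormedAddCommGroup E] [NormedSpace 𝕜 E]
  [NormedAddCommGroup F] [NormedSpace 𝕜 F]

theorem contDiffOn_one_of_continuousOn_fderiv {f : E → F} {s : Set E} (hs : IsOpen s)
    (hf : ∀ x ∈ s, DifferentiableAt 𝕜 f x) (hf' : ContinuousOn (fderiv 𝕜 f) s) :
    ContDiffOn 𝕜 1 f s := by
  rw [← zero_add (1 : WithTop ℕ∞), contDiffOn_succ_iff_fderiv_of_isOpen hs]
  exact ⟨fun x hx => (hf x hx).differentiableWithinAt, by simp, contDiffOn_zero.2 hf'⟩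

theorem fderiv_leftInverse_apply_fderiv [CompleteSpace E] [CompleteSpace F]
    {f : E → F} {g : F → E} {x : E}
    (hf : ContDiffAt 𝕜 1 f x) (hbij : Function.Bijective (fderiv 𝕜 f x))
    (hg : ∀ᶠ z in 𝓝 x, g (f z) = z) (v : E) :
    fderiv 𝕜 g (f x) (fderiv 𝕜 f x v) = v := by
  let e : E ≃L[𝕜] F := .ofBijective (fderiv 𝕜 f x)
    (LinearMap.ker_eq_bot.mpr hbij.1) (LinearMap.range_eq_top.mpr hbij.2)
  have hfe : HasStrictFDerivAt f (e : E →L[𝕜] F) x := by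
    rw [ContinuousLinearEquiv.coe_ofBijective]
    exact hf.hasStrictFDerivAt one_ne_zero
  rw [(hfe.to_local_left_inverse hg).hasFDerivAt.fderiv]
  exact ContinuousLinearEquiv.ofBijective_symm_apply_apply _ _ _ v

end

theorem stmt_2_general (d : ℝ → ℝ) (n : ℕ)
    (Ω : Set (Fin n → ℝ)) (hΩopen : IsOpen Ω)
    (f finv : (Fin n → ℝ) → Fin n → ℝ)
    (hf : ∀ x ∈ Ω, DifferentiableAt ℝ f x)
    (hfc : ContinuousOn (fun x => fderiv ℝ f x) Ω)
    (hfns : ∀ x ∈ Ω, Function.Bijective (fderiv ℝ f x))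
    (hfinv : ∀ x ∈ Ω, finv (f x) = x)
    (hdf : ∀ x ∈ Ω, (fun i => d (f x i)) = fderiv ℝ f x (fun i => d (x i))) :
    ∀ y ∈ f '' Ω,
      (fun i => d (finv y i)) = fderiv ℝ finv y (fun i => d (y i)) := by
  rintro y ⟨x, hx, rfl⟩
  have hC1 : ContDiffAt ℝ 1 f x :=
    (contDiffOn_one_of_continuousOn_fderiv hΩopen hf hfc).contDiffAt (hΩopen.mem_nhds hx)
  have hleft : ∀ᶠ z in 𝓝 x, finv (f z) = z := eventually_of_mem (hΩopen.mem_nhds hx) hfinv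
  rw [hdf x hx, fderiv_leftInverse_apply_fderiv hC1 (hfns x hx) hleft, hfinv x hx]

/-- If `f : Ω → ℝⁿ` is an injective Fréchet differentiable function on a nonempty open set
`Ω ⊆ ℝⁿ` with a continuous nowhere singular derivative and `d` is a derivation with respect
to `f`, then `d` is a derivation with respect to the inverse `f⁻¹` on `f(Ω)`. -/
theorem stmt_2 (d : ℝ → ℝ) (n : ℕ) (hn : 0 < n)
    (Ω : Set (Fin n → ℝ)) (hΩopen : IsOpen Ω) (hΩne : Ω.Nonempty)
    (f finv : (Fin n → ℝ) → Fin n → ℝ)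
    (hf : ∀ x ∈ Ω, DifferentiableAt ℝ f x)
    (hfc : ContinuousOn (fun x => fderiv ℝ f x) Ω)
    (hfns : ∀ x ∈ Ω, Function.Bijective (fderiv ℝ f x))
    (hinj : Set.InjOn f Ω)
    (hfinv : ∀ x ∈ Ω, finv (f x) = x)
    (hdf : ∀ x ∈ Ω, (fun i => d (f x i)) = fderiv ℝ f x (fun i => d (x i))) :
    ∀ y ∈ f '' Ω,
      (fun i => d (finv y i)) = fderiv ℝ finv y (fun i => d (y i)) :=
  stmt_2_general d n Ω hΩopen f finv hf hfc hfns hfinv hdf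
end

section
/- Let Ω₁, Ω₂ ⊆ ℝ^n be nonempty open sets, let f : Ω₁ ∪ Ω₂ ∪ (Ω₁ + Ω₂) → ℝ^m be a Fréchet differentiable function such that f(Ω₁) and f(Ω₂) are open, and assume there exists a Fréchet differentiable function g : f(Ω₁) × f(Ω₂) → ℝ^m such that f(x + y) = g(f(x), f(y)) for all (x, y) ∈ Ω₁ × Ω₂. If d : ℝ → ℝ is an additive function which is a derivation with respect to f, then d is a derivation with respect to g on f(Ω₁) × f(Ω₂). -/
open Pointwise Filter Topology

/-! Differentiating the addition theorem `f (x + y) = g (f x, f y)` in `x` and in `y` expresses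
`f' (x + y)` through the two partial derivatives of `g`: `f' (x + y) (a + b) = g' (f' x a, f' y b)`.
Applying this with `a = d x`, `b = d y` and using the additivity of `d`, the derivation property of
`d` at `x + y` becomes the derivation property with respect to `g` at `(f x, f y)`. -/

section AdditionTheorem

variable {𝕜 E F : Type*} [NontriviallyNormedField 𝕜] [NormedAddCommGroup E] [NormedSpace 𝕜 E]
  [NormedAddCommGroup F] [NormedSpace 𝕜 F] {f : E → F} {g : F × F → F} {x y : E}

theorem fderiv_add_eq_comp_prod_zero
    (h : (fun x' => f (x' + y)) =ᶠ[𝓝 x] fun x' => g (f x', f y))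
    (hfxy : DifferentiableAt 𝕜 f (x + y)) (hfx : DifferentiableAt 𝕜 f x)
    (hg : DifferentiableAt 𝕜 g (f x, f y)) :
    fderiv 𝕜 f (x + y) = (fderiv 𝕜 g (f x, f y)).comp ((fderiv 𝕜 f x).prod 0) := by
  have hshift := hfxy.hasFDerivAt.comp x ((hasFDerivAt_id x).add_const y)
  have hcomp := hg.hasFDerivAt.comp x (hfx.hasFDerivAt.prodMk (hasFDerivAt_const (f y) x))
  simpa only [ContinuousLinearMap.comp_id] using (hshift.congr_of_eventuallyEq h.symm).unique hcomp

theorem fderiv_add_eq_comp_zero_prod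
    (h : (fun y' => f (x + y')) =ᶠ[𝓝 y] fun y' => g (f x, f y'))
    (hfxy : DifferentiableAt 𝕜 f (x + y)) (hfy : DifferentiableAt 𝕜 f y)
    (hg : DifferentiableAt 𝕜 g (f x, f y)) :
    fderiv 𝕜 f (x + y) = (fderiv 𝕜 g (f x, f y)).comp ((0 : E →L[𝕜] F).prod (fderiv 𝕜 f y)) := by
  have hshift := hfxy.hasFDerivAt.comp y ((hasFDerivAt_id y).const_add x)
  have hcomp := hg.hasFDerivAt.comp y ((hasFDerivAt_const (f x) y).prodMk hfy.hasFDerivAt)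
  simpa only [ContinuousLinearMap.comp_id] using (hshift.congr_of_eventuallyEq h.symm).unique hcomp

theorem fderiv_add_apply_add_eq_fderiv_apply
    (hleft : (fun x' => f (x' + y)) =ᶠ[𝓝 x] fun x' => g (f x', f y))
    (hright : (fun y' => f (x + y')) =ᶠ[𝓝 y] fun y' => g (f x, f y'))
    (hfxy : DifferentiableAt 𝕜 f (x + y)) (hfx : DifferentiableAt 𝕜 f x)
    (hfy : DifferentiableAt 𝕜 f y) (hg : DifferentiableAt 𝕜 g (f x, f y)) (a b : E) :
    fderiv 𝕜 f (x + y) (a + b) = fderiv 𝕜 g (f x, f y) (fderiv 𝕜 f x a, fderiv 𝕜 f y b) := by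
  calc fderiv 𝕜 f (x + y) (a + b)
      = fderiv 𝕜 f (x + y) a + fderiv 𝕜 f (x + y) b := map_add _ a b
    _ = fderiv 𝕜 g (f x, f y) (fderiv 𝕜 f x a, 0) + fderiv 𝕜 g (f x, f y) (0, fderiv 𝕜 f y b) := by
      congr 1
      · rw [fderiv_add_eq_comp_prod_zero hleft hfxy hfx hg]; rfl
      · rw [fderiv_add_eq_comp_zero_prod hright hfxy hfy hg]; rfl
    _ = fderiv 𝕜 g (f x, f y) (fderiv 𝕜 f x a, fderiv 𝕜 f y b) := by
      rw [← map_add, Prod.mk_add_mk, add_zero, zero_add]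

end AdditionTheorem

theorem stmt_3_general (d : ℝ → ℝ) (n m : ℕ)
    (Ω₁ Ω₂ : Set (Fin n → ℝ))
    (hΩ₁open : IsOpen Ω₁)
    (hΩ₂open : IsOpen Ω₂)
    (f : (Fin n → ℝ) → Fin m → ℝ)
    (g : ((Fin m → ℝ) × (Fin m → ℝ)) → Fin m → ℝ)
    (hf : ∀ x ∈ Ω₁ ∪ Ω₂ ∪ (Ω₁ + Ω₂), DifferentiableAt ℝ f x)
    (hg : ∀ w ∈ (f '' Ω₁) ×ˢ (f '' Ω₂), DifferentiableAt ℝ g w)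
    (haddth : ∀ x ∈ Ω₁, ∀ y ∈ Ω₂, f (x + y) = g (f x, f y))
    (hadd : ∀ x y : ℝ, d (x + y) = d x + d y)
    (hdf : ∀ x ∈ Ω₁ ∪ Ω₂ ∪ (Ω₁ + Ω₂),
      (fun j => d (f x j)) = fderiv ℝ f x (fun i => d (x i))) :
    ∀ u ∈ f '' Ω₁, ∀ v ∈ f '' Ω₂,
      (fun j => d (g (u, v) j)) =
        fderiv ℝ g (u, v) ((fun i => d (u i)), (fun i => d (v i))) := by
  rintro u ⟨x, hx, rfl⟩ v ⟨y, hy, rfl⟩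
  have hx' : x ∈ Ω₁ ∪ Ω₂ ∪ (Ω₁ + Ω₂) := Or.inl (Or.inl hx)
  have hy' : y ∈ Ω₁ ∪ Ω₂ ∪ (Ω₁ + Ω₂) := Or.inl (Or.inr hy)
  have hxy : x + y ∈ Ω₁ ∪ Ω₂ ∪ (Ω₁ + Ω₂) := Or.inr (Set.add_mem_add hx hy)
  have hleft : (fun x' => f (x' + y)) =ᶠ[𝓝 x] fun x' => g (f x', f y) := by
    filter_upwards [hΩ₁open.mem_nhds hx] with x' hx' using haddth x' hx' y hy
  have hright : (fun y' => f (x + y')) =ᶠ[𝓝 y] fun y' => g (f x, f y') := by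
    filter_upwards [hΩ₂open.mem_nhds hy] with y' hy' using haddth x hx y' hy'
  calc (fun j => d (g (f x, f y) j))
      = fderiv ℝ f (x + y) ((fun i => d (x i)) + fun i => d (y i)) := by
        rw [← haddth x hx y hy, hdf _ hxy]
        exact congrArg _ (funext fun i => hadd (x i) (y i))
    _ = fderiv ℝ g (f x, f y) (fderiv ℝ f x (fun i => d (x i)), fderiv ℝ f y (fun i => d (y i))) :=
        fderiv_add_apply_add_eq_fderiv_apply hleft hright (hf _ hxy) (hf x hx') (hf y hy')
          (hg _ ⟨⟨x, hx, rfl⟩, y, hy, rfl⟩) _ _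
    _ = fderiv ℝ g (f x, f y) ((fun i => d (f x i)), (fun i => d (f y i))) := by
        rw [hdf x hx', hdf y hy']

/-- If `f` satisfies the addition theorem `f(x+y) = g(f(x), f(y))` and the additive function
`d` is a derivation with respect to `f`, then `d` is a derivation with respect to `g` on
`f(Ω₁) × f(Ω₂)`. -/
theorem stmt_3 (d : ℝ → ℝ) (n m : ℕ) (hn : 0 < n) (hm : 0 < m)
    (Ω₁ Ω₂ : Set (Fin n → ℝ))
    (hΩ₁open : IsOpen Ω₁) (hΩ₁ne : Ω₁.Nonempty)
    (hΩ₂open : IsOpen Ω₂) (hΩ₂ne : Ω₂.Nonempty)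
    (f : (Fin n → ℝ) → Fin m → ℝ)
    (g : ((Fin m → ℝ) × (Fin m → ℝ)) → Fin m → ℝ)
    (hf : ∀ x ∈ Ω₁ ∪ Ω₂ ∪ (Ω₁ + Ω₂), DifferentiableAt ℝ f x)
    (hfΩ₁ : IsOpen (f '' Ω₁)) (hfΩ₂ : IsOpen (f '' Ω₂))
    (hg : ∀ w ∈ (f '' Ω₁) ×ˢ (f '' Ω₂), DifferentiableAt ℝ g w)
    (haddth : ∀ x ∈ Ω₁, ∀ y ∈ Ω₂, f (x + y) = g (f x, f y))
    (hadd : ∀ x y : ℝ, d (x + y) = d x + d y)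
    (hdf : ∀ x ∈ Ω₁ ∪ Ω₂ ∪ (Ω₁ + Ω₂),
      (fun j => d (f x j)) = fderiv ℝ f x (fun i => d (x i))) :
    ∀ u ∈ f '' Ω₁, ∀ v ∈ f '' Ω₂,
      (fun j => d (g (u, v) j)) =
        fderiv ℝ g (u, v) ((fun i => d (u i)), (fun i => d (v i))) :=
  stmt_3_general d n m Ω₁ Ω₂ hΩ₁open hΩ₂open f g hf hg haddth hadd hdf
end

section
/- Let r ∈ ℚ, let I ⊆ D_{r-1} be a nonempty open set, and let d : ℝ → ℝ be a ℚ-homogeneous function. If d(x^r) = r·x^{r-1}·d(x) holds for all x ∈ I, then d(x^r) = r·x^{r-1}·d(x) holds for all x ∈ D_{r-1}. -/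
/-- The domain `D_r` of the power function `x ↦ x^r` for a rational exponent `r = m/n`
(in lowest terms, `n > 0`). -/
def qdom (r : ℚ) : Set ℝ :=
  if Odd r.den then
    (if 0 ≤ r.num then Set.univ else {(0 : ℝ)}ᶜ)
  else
    (if 0 ≤ r.num then Set.Ici 0 else Set.Ioi 0)

/-- The real power function `x ↦ x^r` with rational exponent `r = m/n` (in lowest terms);
for `x < 0` (and `n` odd) it is the real `n`-th root of `x^m`. -/
noncomputable def qpow (x : ℝ) (r : ℚ) : ℝ :=
  if 0 ≤ x then x ^ (r : ℝ)
  else if Odd r.num then -((-x) ^ (r : ℝ)) else (-x) ^ (r : ℝ)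

/-
Write `r = m/n` in lowest terms. A rational scaling `x ↦ t^n x` multiplies `x^r` by `t^m` and
`x^{r-1}` by `t^{m-n}`, while `ℚ`-homogeneity pulls `t^m` and `t^n` out of `d`; so the identity
`d(x^r) = r x^{r-1} d(x)` holds at `x` as soon as it holds at `t^n x`. For `x ≠ 0` in `D_{r-1}`
the admissible scalings (`t > 0`, or any `t ≠ 0` when `n` is odd) map `x` onto an open set of
reals that meets `I`, and by density of `ℚ` some rational `t` then puts `t^n x` in `I`.
The point `x = 0` lies in `D_{r-1}` only if `r ≥ 1`, where both sides vanish.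
-/

theorem Rat.den_sub_one (q : ℚ) : (q - 1).den = q.den := by
  exact_mod_cast Rat.sub_intCast_den q 1

theorem Rat.num_sub_one (q : ℚ) : (q - 1).num = q.num - q.den := by
  have h := Rat.mul_den_eq_num (q - 1)
  rw [Rat.den_sub_one, sub_mul, Rat.mul_den_eq_num, one_mul] at h
  exact_mod_cast h.symm

theorem zero_mem_qdom_iff {q : ℚ} : (0 : ℝ) ∈ qdom q ↔ 0 ≤ q := by
  rw [← Rat.num_nonneg, qdom]
  split_ifs <;> simp_all

theorem pos_of_mem_qdom {q : ℚ} (hq : ¬Odd q.den) {x : ℝ} (hx : x ∈ qdom q) (hx0 : x ≠ 0) :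
    0 < x := by
  rw [qdom, if_neg hq] at hx
  split_ifs at hx
  · exact lt_of_le_of_ne hx hx0.symm
  · exact hx

theorem qpow_zero_left {r : ℚ} (hr : r ≠ 0) : qpow 0 r = 0 := by
  rw [qpow, if_pos le_rfl, Real.zero_rpow (by exact_mod_cast hr)]

theorem qpow_neg (x : ℝ) (r : ℚ) : qpow (-x) r = (-1) ^ r.num * qpow x r := by
  rcases r.num.even_or_odd with hm | hm
  · have hm' : ¬Odd r.num := Int.not_odd_iff_even.2 hm
    rw [hm.neg_one_zpow, one_mul]
    rcases lt_trichotomy x 0 with hx | rfl | hx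
    · rw [qpow, qpow, if_pos (by linarith), if_neg (not_le.2 hx), if_neg hm']
    · rw [neg_zero]
    · rw [qpow, qpow, if_neg (by linarith), if_pos hx.le, if_neg hm', neg_neg]
  · rw [hm.neg_one_zpow, neg_one_mul]
    rcases lt_trichotomy x 0 with hx | rfl | hx
    · rw [qpow, qpow, if_pos (by linarith), if_neg (not_le.2 hx), if_pos hm, neg_neg]
    · have hr : r ≠ 0 := fun h ↦ by simp [h] at hm
      rw [neg_zero, qpow_zero_left hr, neg_zero]
    · rw [qpow, qpow, if_neg (by linarith), if_pos hx.le, if_pos hm, neg_neg]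

theorem qpow_pow_den_mul_of_pos (r : ℚ) {s : ℝ} (hs : 0 < s) (x : ℝ) :
    qpow (s ^ r.den * x) r = s ^ r.num * qpow x r := by
  have hscale : ∀ z : ℝ, 0 ≤ z → (s ^ r.den * z) ^ (r : ℝ) = s ^ r.num * z ^ (r : ℝ) := by
    intro z hz
    rw [Real.mul_rpow (by positivity) hz, ← Real.rpow_natCast, ← Real.rpow_mul hs.le,
      ← Real.rpow_intCast, Rat.cast_def, mul_div_cancel₀ _ (by exact_mod_cast r.den_nz)]
  rcases le_or_gt 0 x with hx | hx
  · rw [qpow, qpow, if_pos (by positivity), if_pos hx, hscale x hx]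
  · have hsx : s ^ r.den * x < 0 := mul_neg_of_pos_of_neg (by positivity) hx
    rw [qpow, qpow, if_neg hsx.not_ge, if_neg hx.not_ge, ← mul_neg,
      hscale (-x) (by linarith)]
    split_ifs <;> ring

theorem qpow_pow_den_mul (r : ℚ) {s : ℝ} (hs0 : s ≠ 0) (hs : 0 < s ∨ Odd r.den) (x : ℝ) :
    qpow (s ^ r.den * x) r = s ^ r.num * qpow x r := by
  rcases hs0.lt_or_gt with hneg | hpos
  · have hodd : Odd r.den := hs.resolve_left hneg.not_gt
    have hu : 0 < -s := neg_pos.2 hneg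
    calc qpow (s ^ r.den * x) r = qpow ((-s) ^ r.den * -x) r := by rw [hodd.neg_pow]; ring_nf
      _ = (-s) ^ r.num * (-1) ^ r.num * qpow x r := by
        rw [qpow_pow_den_mul_of_pos r hu, qpow_neg, mul_assoc]
      _ = s ^ r.num * qpow x r := by rw [← mul_zpow, neg_mul_neg, mul_one]
  · exact qpow_pow_den_mul_of_pos r hpos x

theorem exists_pow_eq_of_pos_or_odd {n : ℕ} (hn : n ≠ 0) {c : ℝ} (hc : 0 < c ∨ Odd n) :
    ∃ s : ℝ, (0 < s ∨ Odd n) ∧ s ^ n = c := by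
  rcases lt_or_ge 0 c with hpos | hnonpos
  · exact ⟨c ^ (n⁻¹ : ℝ), .inl (by positivity), Real.rpow_inv_natCast_pow hpos.le hn⟩
  · have hodd : Odd n := hc.resolve_left hnonpos.not_gt
    refine ⟨-(-c) ^ (n⁻¹ : ℝ), .inr hodd, ?_⟩
    rw [hodd.neg_pow, Real.rpow_inv_natCast_pow (by linarith) hn, neg_neg]

theorem exists_rat_pow_mul_mem {n : ℕ} (hn : n ≠ 0) {I : Set ℝ} (hI : IsOpen I) {x y : ℝ}
    (hx : x ≠ 0) (hy : y ∈ I) (hy0 : y ≠ 0) (hxy : 0 < y / x ∨ Odd n) :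
    ∃ t : ℚ, t ≠ 0 ∧ (0 < t ∨ Odd n) ∧ (t : ℝ) ^ n * x ∈ I := by
  set U : Set ℝ := {s | s ≠ 0 ∧ (0 < s ∨ Odd n) ∧ s ^ n * x ∈ I}
  have hU : IsOpen U :=
    isOpen_ne.inter ((isOpen_lt continuous_const continuous_id).union isOpen_const |>.inter
      (hI.preimage (by fun_prop)))
  obtain ⟨s, hs, hsn⟩ := exists_pow_eq_of_pos_or_odd hn hxy
  have hsU : s ∈ U :=
    ⟨fun h ↦ div_ne_zero hy0 hx (by rw [← hsn, h, zero_pow hn]), hs,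
      by rwa [hsn, div_mul_cancel₀ _ hx]⟩
  obtain ⟨t, ht0, htn, htI⟩ := Rat.denseRange_cast.exists_mem_open hU ⟨s, hsU⟩
  exact ⟨t, by exact_mod_cast ht0, by exact_mod_cast htn, htI⟩

def PowerRuleAt (d : ℝ → ℝ) (r : ℚ) (x : ℝ) : Prop :=
  d (qpow x r) = r * qpow x (r - 1) * d x

theorem PowerRuleAt.zero {d : ℝ → ℝ} (hhom : ∀ (q : ℚ) (x : ℝ), d (q * x) = q * d x) {r : ℚ}
    (hr : r ≠ 0) : PowerRuleAt d r 0 := by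
  have hd0 : d 0 = 0 := by simpa using hhom 0 0
  rw [PowerRuleAt, qpow_zero_left hr, hd0, mul_zero]

theorem PowerRuleAt.of_pow_den_mul {d : ℝ → ℝ}
    (hhom : ∀ (q : ℚ) (x : ℝ), d (q * x) = q * d x) {r t : ℚ} (ht : t ≠ 0) (htr : 0 < t ∨ Odd r.den) {x : ℝ}
    (h : PowerRuleAt d r ((t : ℝ) ^ r.den * x)) : PowerRuleAt d r x := by
  have ht' : (t : ℝ) ≠ 0 := by exact_mod_cast ht
  have htr' : 0 < (t : ℝ) ∨ Odd r.den := htr.imp_left Rat.cast_pos.2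
  have hd : ∀ (k : ℤ) (z : ℝ), d ((t : ℝ) ^ k * z) = (t : ℝ) ^ k * d z := fun k z ↦ by
    exact_mod_cast hhom (t ^ k) z
  have hpow : (t : ℝ) ^ (r.num - r.den) * (t : ℝ) ^ r.den = (t : ℝ) ^ r.num := by
    rw [← zpow_natCast, ← zpow_add₀ ht', sub_add_cancel]
  have hsub := qpow_pow_den_mul (r - 1) ht' (by rwa [Rat.den_sub_one]) x
  rw [Rat.den_sub_one, Rat.num_sub_one] at hsub
  rw [PowerRuleAt, qpow_pow_den_mul r ht' htr' x, hsub, hd, ← zpow_natCast, hd,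
    zpow_natCast] at h
  refine mul_left_cancel₀ (zpow_ne_zero r.num ht') ?_
  linear_combination h + r * qpow x (r - 1) * d x * hpow

/-- If a `ℚ`-homogeneous function `d` satisfies `d(x^r) = r x^{r-1} d(x)` on a nonempty
open subset of `D_{r-1}`, then it satisfies it on all of `D_{r-1}`. -/
theorem stmt_4 (r : ℚ) (I : Set ℝ) (hIne : I.Nonempty) (hIopen : IsOpen I)
    (hI : I ⊆ qdom (r - 1)) (d : ℝ → ℝ)
    (hhom : ∀ (q : ℚ) (x : ℝ), d (q * x) = q * d x)
    (h : ∀ x ∈ I, d (qpow x r) = (r : ℝ) * qpow x (r - 1) * d x) :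
    ∀ x ∈ qdom (r - 1), d (qpow x r) = (r : ℝ) * qpow x (r - 1) * d x := by
  intro x hx
  rcases eq_or_ne x 0 with rfl | hx0
  · have hr : 1 ≤ r := sub_nonneg.1 (zero_mem_qdom_iff.1 hx)
    exact PowerRuleAt.zero hhom (by positivity)
  obtain ⟨y, hy0, hyI⟩ := (dense_compl_singleton (0 : ℝ)).exists_mem_open hIopen hIne
  have hxy : 0 < y / x ∨ Odd r.den := by
    rw [← Rat.den_sub_one]
    by_cases hodd : Odd (r - 1).den
    · exact .inr hodd
    · exact .inl (div_pos (pos_of_mem_qdom hodd (hI hyI) hy0) (pos_of_mem_qdom hodd hx hx0))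
  obtain ⟨t, ht0, htr, htI⟩ := exists_rat_pow_mul_mem r.den_nz hIopen hx0 hyI hy0 hxy
  exact PowerRuleAt.of_pow_den_mul hhom ht0 htr (h _ htI)
end

section
/- Let d : ℝ → ℝ be an additive function, let r ∈ ℚ with r ≠ 0 and r ≠ 1, and let I ⊆ D_r be a nonempty open interval. Then d is a standard derivation if and only if d(x^r) = r·x^{r-1}·d(x) holds for all x ∈ I. -/
open Polynomial Finset

lemma Rat.sub_one_den (r : ℚ) : (r - 1).den = r.den := by
  simp

lemma Rat.sub_one_num (r : ℚ) : (r - 1).num = r.num - r.den := by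
  have h := (r - 1).mul_den_eq_num
  rw [Rat.sub_one_den, sub_mul, one_mul, r.mul_den_eq_num] at h
  exact_mod_cast h.symm

lemma odd_den_of_mem_qdom_of_neg {r : ℚ} {x : ℝ} (hx : x ∈ qdom r) (hneg : x < 0) :
    Odd r.den := by
  by_contra hodd
  unfold qdom at hx
  split_ifs at hx <;> simp only [Set.mem_Ici, Set.mem_Ioi] at hx <;> linarith

lemma exists_pow_den_eq_of_mem_qdom {r : ℚ} {x : ℝ} (hx : x ∈ qdom r) :
    ∃ w : ℝ, (0 ≤ w ∨ Odd r.den) ∧ w ^ r.den = x := by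
  rcases le_or_gt 0 x with hx0 | hx0
  · exact ⟨x ^ (r.den⁻¹ : ℝ), .inl (by positivity), Real.rpow_inv_natCast_pow hx0 r.den_ne_zero⟩
  · have hodd := odd_den_of_mem_qdom_of_neg hx hx0
    refine ⟨-(-x) ^ (r.den⁻¹ : ℝ), .inr hodd, ?_⟩
    rw [hodd.neg_pow, Real.rpow_inv_natCast_pow (by linarith) r.den_ne_zero, neg_neg]

lemma rpow_ratCast_pow_den {w : ℝ} (hw : 0 ≤ w) (s : ℚ) : (w ^ s.den) ^ (s : ℝ) = w ^ s.num := by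
  rw [← Real.rpow_natCast_mul hw, ← Real.rpow_intCast, Rat.cast_def]
  field_simp

lemma qpow_pow_den {w : ℝ} (s : ℚ) (hw : 0 ≤ w ∨ Odd s.den) : qpow (w ^ s.den) s = w ^ s.num := by
  rcases le_or_gt 0 w with hw0 | hw0
  · rw [qpow, if_pos (by positivity), rpow_ratCast_pow_den hw0]
  · have hodd : Odd s.den := hw.resolve_left (not_le.mpr hw0)
    have hneg : -w ^ s.den = (-w) ^ s.den := hodd.neg_pow w |>.symm
    rw [qpow, if_neg (not_le.mpr (hodd.pow_neg hw0)), hneg, rpow_ratCast_pow_den (by linarith)]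
    rcases s.num.even_or_odd with he | ho
    · rw [if_neg (Int.not_odd_iff_even.mpr he), he.neg_zpow]
    · rw [if_pos ho, ho.neg_zpow, neg_neg]

lemma qpow_sub_one_pow_den {w : ℝ} (r : ℚ) (hw : 0 ≤ w ∨ Odd r.den) :
    qpow (w ^ r.den) (r - 1) = w ^ (r.num - r.den) := by
  have h := qpow_pow_den (w := w) (r - 1) (by rwa [Rat.sub_one_den])
  rwa [Rat.sub_one_den, Rat.sub_one_num] at h

lemma map_ratCast_mul (d : ℝ →+ ℝ) (q : ℚ) (x : ℝ) : d (q * x) = q * d x := by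
  simpa only [smul_eq_mul] using map_ratCast_smul d ℝ ℝ q x

lemma map_zpow_of_leibniz (d : ℝ →+ ℝ) (hder : ∀ x y, d (x * y) = d x * y + x * d y)
    (w : ℝ) (j : ℤ) : d (w ^ j) = j * w ^ (j - 1) * d w := by
  let D : Derivation ℤ ℝ ℝ := .mk' d.toIntLinearMap fun a b => by
    simp only [AddMonoidHom.coe_toIntLinearMap, hder, smul_eq_mul]; ring
  have hD : ⇑D = ⇑d := rfl
  simpa [hD, smul_eq_mul, mul_assoc] using D.leibniz_zpow w j

lemma map_qpow_of_leibniz (d : ℝ →+ ℝ) (hder : ∀ x y, d (x * y) = d x * y + x * d y)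
    {r : ℚ} {x : ℝ} (hx : x ∈ qdom r) : d (qpow x r) = r * qpow x (r - 1) * d x := by
  obtain ⟨w, hw, rfl⟩ := exists_pow_den_eq_of_mem_qdom hx
  rw [qpow_pow_den r hw, qpow_sub_one_pow_den r hw, ← zpow_natCast,
    map_zpow_of_leibniz d hder, map_zpow_of_leibniz d hder]
  rcases eq_or_ne w 0 with rfl | hw0
  · simp
  have hpow : w ^ (r.num - 1) = w ^ (r.num - r.den) * w ^ ((r.den : ℤ) - 1) := by
    rw [← zpow_add₀ hw0]; ring_nf
  rw [hpow, Rat.cast_def]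
  field_simp
  push_cast
  ring

/-- `d(x^r) = r x^(r-1) d(x)` for `r = m/n`, written at `x = t^n` and multiplied by `n`. -/
def PowRelAt (d : ℝ → ℝ) (m n : ℤ) (t : ℝ) : Prop :=
  (n : ℝ) * d (t ^ m) = m * t ^ (m - n) * d (t ^ n)

namespace PowRelAt

variable {m n : ℤ} {t : ℝ}

lemma of_ratCast_mul {d : ℝ →+ ℝ} {q : ℚ} (hq : q ≠ 0) (h : PowRelAt d m n (q * t)) :
    PowRelAt d m n t := by
  have hq' : (q : ℝ) ≠ 0 := by exact_mod_cast hq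
  have hmap (j : ℤ) : d ((q * t) ^ j) = q ^ j * d (t ^ j) := by
    rw [mul_zpow, ← Rat.cast_zpow, map_ratCast_mul, Rat.cast_zpow]
  have hsplit : (q : ℝ) ^ m = q ^ (m - n) * q ^ n := by rw [← zpow_add₀ hq']; ring_nf
  unfold PowRelAt at h ⊢
  rw [hmap, hmap, mul_zpow, hsplit] at h
  refine mul_left_cancel₀ (zpow_ne_zero m hq') ?_
  rw [hsplit]
  linear_combination h

lemma of_neg {d : ℝ →+ ℝ} (h : PowRelAt d m n (-t)) : PowRelAt d m n t :=
  of_ratCast_mul (q := -1) (by norm_num) (by simpa using h)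

lemma symm {d : ℝ → ℝ} (ht : t ≠ 0) (h : PowRelAt d m n t) : PowRelAt d n m t := by
  have hinv : t ^ (n - m) * t ^ (m - n) = 1 := by rw [← zpow_add₀ ht]; simp
  unfold PowRelAt at h ⊢
  linear_combination (t ^ (n - m)) * h.symm + (m * d (t ^ n)) * hinv.symm

lemma sq {d : ℝ → ℝ} (ht : t ≠ 0) (hm : PowRelAt d m n (t ^ m)) (hn : PowRelAt d m n (t ^ n)) :
    PowRelAt d (m * m) (n * n) t := by
  have hsplit : t ^ (m * m - n * n) = t ^ (m * (m - n)) * t ^ (n * (m - n)) := by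
    rw [← zpow_add₀ ht]; ring_nf
  unfold PowRelAt at hm hn ⊢
  simp only [← zpow_mul] at hm hn
  rw [mul_comm n m] at hn
  rw [hsplit]
  push_cast
  linear_combination (n : ℝ) * hm + m * t ^ (m * (m - n)) * hn

end PowRelAt

noncomputable def binomPoly (f : ℕ → ℝ) (k : ℕ) : ℝ[X] :=
  ∑ i ∈ range (k + 1), C (k.choose i * f i) * X ^ i

lemma coeff_binomPoly (f : ℕ → ℝ) (k i : ℕ) : (binomPoly f k).coeff i = k.choose i * f i := by
  rw [binomPoly, finsetSum_coeff]
  simp only [coeff_C_mul_X_pow, sum_ite_eq, mem_range]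
  split_ifs with hi
  · rfl
  · rw [Nat.choose_eq_zero_of_lt (by omega), Nat.cast_zero, zero_mul]

lemma eval_binomPoly_pow (t u : ℝ) (k : ℕ) : (binomPoly (t ^ ·) k).eval u = (1 + u * t) ^ k := by
  rw [add_comm, add_pow]
  simp only [binomPoly, eval_finsetSum, eval_mul, eval_C, eval_pow, eval_X]
  refine sum_congr rfl fun i _ => ?_
  ring

lemma eval_binomPoly_map_pow (d : ℝ →+ ℝ) (t : ℝ) (u : ℚ) (k : ℕ) :
    (binomPoly (fun i => d (t ^ i)) k).eval (u : ℝ) = d ((1 + u * t) ^ k) := by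
  rw [add_comm, add_pow, map_sum]
  simp only [binomPoly, eval_finsetSum, eval_mul, eval_C, eval_pow, eval_X]
  refine sum_congr rfl fun i _ => ?_
  have hrat : (u * t) ^ i * (k.choose i : ℝ) = ((u ^ i * k.choose i : ℚ) : ℝ) * t ^ i := by
    push_cast; ring
  rw [one_pow, mul_one, hrat, map_ratCast_mul]
  push_cast; ring

lemma map_sq_of_powRelAt_nat (d : ℝ →+ ℝ) {M N : ℕ} (hN : 0 < N) (hNM : N < M)
    (h : ∀ s, PowRelAt d M N s) (t : ℝ) : d (t ^ 2) = 2 * t * d t := by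
  set P := binomPoly (fun i => d (t ^ i))
  have hpoly : C (N : ℝ) * P M = C (M : ℝ) * (binomPoly (t ^ ·) (M - N) * P N) := by
    refine eq_of_infinite_eval_eq _ _ <|
      (Set.infinite_range_of_injective Rat.cast_injective).mono ?_
    rintro _ ⟨u, rfl⟩
    have hs := h (1 + u * t)
    simp only [PowRelAt, zpow_natCast, ← Nat.cast_sub hNM.le, Int.cast_natCast] at hs
    simp only [Set.mem_ofPred_eq, eval_mul, eval_C, P, eval_binomPoly_pow, eval_binomPoly_map_pow,
      hs]
    ring
  have h0 : (N : ℝ) * d 1 = M * d 1 := by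
    simpa [coeff_mul, coeff_binomPoly, P] using congrArg (coeff · 0) hpoly
  have h2 : (N : ℝ) * (M.choose 2 * d (t ^ 2)) = M * (N.choose 2 * d (t ^ 2) +
      ((M - N : ℕ) * t * (N * d t) + (M - N).choose 2 * t ^ 2 * d 1)) := by
    simpa [coeff_mul, Nat.sum_antidiagonal_succ, coeff_binomPoly, P] using
      congrArg (coeff · 2) hpoly
  have hd1 : d 1 = 0 := by
    have hNM' : (N : ℝ) ≠ M := by exact_mod_cast hNM.ne
    have h0' : ((N : ℝ) - M) * d 1 = 0 := by linear_combination h0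
    exact (mul_eq_zero.mp h0').resolve_left (sub_ne_zero.mpr hNM')
  rw [hd1, Nat.cast_choose_two, Nat.cast_choose_two, Nat.cast_sub hNM.le] at h2
  have hN' : (0 : ℝ) < N := by exact_mod_cast hN
  have hMN : (0 : ℝ) < M - N := by rw [sub_pos]; exact_mod_cast hNM
  have hfactor : (M * N * (M - N) / 2 : ℝ) ≠ 0 := by
    exact (div_pos (mul_pos (mul_pos (hN'.trans (sub_pos.mp hMN)) hN') hMN) two_pos).ne'
  refine mul_left_cancel₀ hfactor ?_
  linear_combination h2

lemma powRelAt_zero (d : ℝ →+ ℝ) {m n : ℤ} (hm : m ≠ 0) (hn : n ≠ 0) : PowRelAt d m n 0 := by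
  simp [PowRelAt, zero_zpow _ hm, zero_zpow _ hn]

lemma map_sq_of_powRelAt_pos (d : ℝ →+ ℝ) {m n : ℤ} (hm : 0 < m) (hn : 0 < n) (hmn : m ≠ n)
    (h : ∀ t ≠ 0, PowRelAt d m n t) (t : ℝ) : d (t ^ 2) = 2 * t * d t := by
  wlog hnm : n < m generalizing m n
  · exact this hn hm hmn.symm (fun t ht => (h t ht).symm ht) (by omega)
  lift m to ℕ using hm.le
  lift n to ℕ using hn.le
  refine map_sq_of_powRelAt_nat d (M := m) (N := n) (by omega) (by omega) (fun s => ?_) t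
  rcases eq_or_ne s 0 with rfl | hs
  · exact powRelAt_zero d (by omega) (by omega)
  · exact h s hs

lemma map_sq_of_powRelAt_neg_one (d : ℝ →+ ℝ) (h : ∀ t ≠ 0, PowRelAt d (-1) 1 t) (t : ℝ) :
    d (t ^ 2) = 2 * t * d t := by
  have hinv (s : ℝ) (hs : s ≠ 0) : d s⁻¹ = -d s / s ^ 2 := by
    simpa [PowRelAt, neg_div, inv_mul_eq_div] using h s hs
  have hd1 : d 1 = 0 := by linarith [hinv 1 one_ne_zero]
  rcases eq_or_ne t 0 with rfl | ht0
  · simp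
  rcases eq_or_ne t (-1) with rfl | ht1
  · simp [hd1]
  have ht1' : t + 1 ≠ 0 := fun h => ht1 (by linarith)
  have hsq_add : t ^ 2 + t ≠ 0 := by rw [sq, ← mul_add_one]; exact mul_ne_zero ht0 ht1'
  have hsplit : t⁻¹ = (t + 1)⁻¹ + (t ^ 2 + t)⁻¹ := by field_simp
  have key := congrArg d hsplit
  rw [map_add, hinv t ht0, hinv _ ht1', hinv _ hsq_add, map_add, map_add, hd1] at key
  field_simp at key
  linear_combination key

lemma leibniz_of_map_sq (d : ℝ →+ ℝ) (hsq : ∀ t, d (t ^ 2) = 2 * t * d t) (x y : ℝ) :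
    d (x * y) = d x * y + x * d y := by
  have hxy := hsq (x + y)
  rw [show (x + y) ^ 2 = x ^ 2 + (x * y + x * y) + y ^ 2 by ring, map_add, map_add, map_add,
    hsq, hsq, map_add] at hxy
  linear_combination hxy / 2

lemma leibniz_of_powRelAt (d : ℝ →+ ℝ) {m : ℤ} {n : ℕ} (hm : m ≠ 0) (hn : 0 < n) (hmn : m ≠ n)
    (hcop : m.natAbs.Coprime n) (h : ∀ t ≠ 0, PowRelAt d m n t) (x y : ℝ) :
    d (x * y) = d x * y + x * d y := by
  refine leibniz_of_map_sq d (fun t => ?_) x y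
  rcases hm.lt_or_gt with hm | hm
  · rcases eq_or_ne m (-n) with rfl | hmn'
    · obtain rfl : n = 1 := by simpa using hcop
      exact map_sq_of_powRelAt_neg_one d h t
    · refine map_sq_of_powRelAt_pos d (mul_pos_of_neg_of_neg hm hm) (by positivity) ?_
        (fun t ht => (h _ (zpow_ne_zero m ht)).sq ht (h _ (zpow_ne_zero n ht))) t
      rw [Ne, mul_self_eq_mul_self_iff, not_or]
      exact ⟨hmn, hmn'⟩
  · exact map_sq_of_powRelAt_pos d hm (by exact_mod_cast hn) hmn h t

lemma powRelAt_of_pow_den_mem {d : ℝ →+ ℝ} {r : ℚ} {s : Set ℝ}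
    (h : ∀ x ∈ s, d (qpow x r) = r * qpow x (r - 1) * d x) {w : ℝ} (hw : w ^ r.den ∈ s) :
    PowRelAt d r.num r.den w := by
  wlog hw' : 0 ≤ w ∨ Odd r.den generalizing w
  · obtain ⟨hneg, hodd⟩ := not_or.mp hw'
    refine PowRelAt.of_neg (this ?_ (.inl (neg_nonneg.mpr (not_le.mp hneg).le)))
    rwa [(Nat.not_odd_iff_even.mp hodd).neg_pow]
  have hrel := h _ hw
  rw [qpow_pow_den r hw', qpow_sub_one_pow_den r hw', Rat.cast_def, ← zpow_natCast] at hrel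
  unfold PowRelAt
  rw [hrel]
  field_simp
  push_cast
  ring

lemma exists_ratCast_mul_pow_den_mem {r : ℚ} {a b : ℝ} (hab : a < b) (hI : Set.Ioo a b ⊆ qdom r)
    {t : ℝ} (ht : t ≠ 0) : ∃ q : ℚ, q ≠ 0 ∧ ((q : ℝ) * t) ^ r.den ∈ Set.Ioo a b := by
  obtain ⟨c, ⟨hcI, hc0⟩⟩ := ((Set.Ioo_infinite hab).sdiff (Set.finite_singleton 0)).nonempty
  obtain ⟨w, -, rfl⟩ := exists_pow_den_eq_of_mem_qdom (hI hcI)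
  have hw0 : w ≠ 0 := by rintro rfl; simp [r.den_ne_zero] at hc0
  set W := (fun ρ : ℝ => (ρ * t) ^ r.den) ⁻¹' Set.Ioo a b ∩ {0}ᶜ
  have hWopen : IsOpen W :=
    (isOpen_Ioo.preimage (by fun_prop)).inter isOpen_compl_singleton
  have hwW : w / t ∈ W := ⟨by simpa [div_mul_cancel₀ _ ht] using hcI, div_ne_zero hw0 ht⟩
  obtain ⟨q, hqW, hq0⟩ := Rat.denseRange_cast.exists_mem_open hWopen ⟨_, hwW⟩
  exact ⟨q, by simpa using hq0, hqW⟩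

lemma powRelAt_of_forall_mem_Ioo {d : ℝ →+ ℝ} {r : ℚ} {a b : ℝ} (hab : a < b)
    (hI : Set.Ioo a b ⊆ qdom r) (h : ∀ x ∈ Set.Ioo a b, d (qpow x r) = r * qpow x (r - 1) * d x)
    {t : ℝ} (ht : t ≠ 0) : PowRelAt d r.num r.den t := by
  obtain ⟨q, hq0, hq⟩ := exists_ratCast_mul_pow_den_mem hab hI ht
  exact (powRelAt_of_pow_den_mem h hq).of_ratCast_mul hq0

/-- An additive function `d` is a standard derivation if and only if
`d(x^r) = r x^{r-1} d(x)` holds on a nonempty open subinterval `I ⊆ D_r`,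
where `r ∈ ℚ \ {0, 1}`. -/
theorem stmt_5 (d : ℝ → ℝ) (hd : ∀ x y : ℝ, d (x + y) = d x + d y)
    (r : ℚ) (hr0 : r ≠ 0) (hr1 : r ≠ 1)
    (a b : ℝ) (hab : a < b) (hI : Set.Ioo a b ⊆ qdom r) :
    (∀ x y : ℝ, d (x * y) = d x * y + x * d y) ↔
      (∀ x ∈ Set.Ioo a b, d (qpow x r) = (r : ℝ) * qpow x (r - 1) * d x) := by
  let D := AddMonoidHom.mk' d hd
  refine ⟨fun hder x hx => map_qpow_of_leibniz D hder (hI hx), fun h => ?_⟩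
  have hnum_ne_den : r.num ≠ r.den := fun heq => hr1 <| by
    rw [← Rat.num_div_den r, heq]; exact div_self (by exact_mod_cast r.den_ne_zero)
  exact leibniz_of_powRelAt D (Rat.num_ne_zero.mpr hr0) r.den_pos hnum_ne_den r.reduced
    fun t ht => powRelAt_of_forall_mem_Ioo hab hI h ht
end

section
/- Let U ⊆ ℝ² be a nonempty open set and let d : ℝ → ℝ be a ℚ-homogeneous function satisfying d(x·y) = d(x)·y + x·d(y) for all (x, y) ∈ U. Then d(x·y) = d(x)·y + x·d(y) holds for all x, y ∈ ℝ. -/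
lemma ratmul_dense (x : ℝ) (hx : x ≠ 0) (r ε : ℝ) (hε : 0 < ε) :
    ∃ p : ℚ, |(p : ℝ) * x - r| < ε := by
  have hax : 0 < |x| := abs_pos.mpr hx
  obtain ⟨p, h1, h2⟩ := exists_rat_btwn (show r / x - ε / |x| < r / x + ε / |x| by
    have : 0 < ε / |x| := div_pos hε hax
    linarith)
  refine ⟨p, ?_⟩
  have habs : |(p : ℝ) - r / x| < ε / |x| := by
    rw [abs_sub_lt_iff]; constructor <;> linarith
  have : |(p : ℝ) * x - r| = |(p : ℝ) - r / x| * |x| := by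
    rw [← abs_mul]
    congr 1
    field_simp
  rw [this]
  calc |(p : ℝ) - r / x| * |x| < (ε / |x|) * |x| := by
        exact mul_lt_mul_of_pos_right habs hax
    _ = ε := by field_simp

/-- If a `ℚ`-homogeneous function `d` satisfies the Leibniz rule on a nonempty open subset
`U ⊆ ℝ²`, then it satisfies the Leibniz rule everywhere. -/
theorem stmt_6 (U : Set (ℝ × ℝ)) (hUopen : IsOpen U) (hUne : U.Nonempty)
    (d : ℝ → ℝ) (hhom : ∀ (q : ℚ) (x : ℝ), d (q * x) = q * d x)
    (h : ∀ p ∈ U, d (p.1 * p.2) = d p.1 * p.2 + p.1 * d p.2) :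
    ∀ x y : ℝ, d (x * y) = d x * y + x * d y := by
  have hd0 : d 0 = 0 := by
    have := hhom 0 0
    simpa using this
  -- find a point of U with both coordinates nonzero
  obtain ⟨c, hc⟩ := hUne
  obtain ⟨ε, hε, hball⟩ := Metric.isOpen_iff.mp hUopen c hc
  set a : ℝ := if c.1 = 0 then ε / 2 else c.1 with ha
  set b : ℝ := if c.2 = 0 then ε / 2 else c.2 with hb
  have ha0 : a ≠ 0 := by
    rw [ha]; split <;> simp_all <;> positivity
  have hb0 : b ≠ 0 := by
    rw [hb]; split <;> simp_all <;> positivity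
  have habU : (a, b) ∈ U := by
    apply hball
    rw [Metric.mem_ball, Prod.dist_eq]
    have h1 : dist a c.1 < ε := by
      rw [Real.dist_eq, ha]; split
      · simp_all; rw [abs_of_pos (by positivity)]; linarith
      · simpa using hε
    have h2 : dist b c.2 < ε := by
      rw [Real.dist_eq, hb]; split
      · simp_all; rw [abs_of_pos (by positivity)]; linarith
      · simpa using hε
    exact max_lt h1 h2
  obtain ⟨δ, hδ, hball2⟩ := Metric.isOpen_iff.mp hUopen (a, b) habU
  intro x y
  rcases eq_or_ne x 0 with rfl | hx
  · simp [hd0]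
  rcases eq_or_ne y 0 with rfl | hy
  · simp [hd0]
  -- choose rationals p q with (p x, q y) in the δ-ball around (a,b)
  obtain ⟨p, hp⟩ := ratmul_dense x hx a (min δ |a|) (lt_min hδ (abs_pos.mpr ha0))
  obtain ⟨q, hq⟩ := ratmul_dense y hy b (min δ |b|) (lt_min hδ (abs_pos.mpr hb0))
  have hp0 : (p : ℝ) ≠ 0 := by
    intro h0
    rw [h0, zero_mul, zero_sub, abs_neg] at hp
    exact absurd (lt_of_lt_of_le hp (min_le_right _ _)) (lt_irrefl _)
  have hq0 : (q : ℝ) ≠ 0 := by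
    intro h0
    rw [h0, zero_mul, zero_sub, abs_neg] at hq
    exact absurd (lt_of_lt_of_le hq (min_le_right _ _)) (lt_irrefl _)
  have hmem : ((p : ℝ) * x, (q : ℝ) * y) ∈ U := by
    apply hball2
    rw [Metric.mem_ball, Prod.dist_eq]
    refine max_lt ?_ ?_
    · rw [Real.dist_eq]; exact lt_of_lt_of_le hp (min_le_left _ _)
    · rw [Real.dist_eq]; exact lt_of_lt_of_le hq (min_le_left _ _)
  have key := h _ hmem
  simp only at key
  have e1 : (p : ℝ) * x * ((q : ℝ) * y) = ((p * q : ℚ) : ℝ) * (x * y) := by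
    push_cast; ring
  rw [e1, hhom (p * q), hhom p, hhom q] at key
  push_cast at key
  have hpq : (p : ℝ) * q ≠ 0 := mul_ne_zero hp0 hq0
  have : (p : ℝ) * q * d (x * y) = (p : ℝ) * q * (d x * y + x * d y) := by
    rw [key]; ring
  exact mul_left_cancel₀ hpq this
end

section
/- Let d : ℝ → ℝ be an additive function and let α, β ∈ ℝ satisfy 2α < β and α < 2β. If d(exp(x)) = exp(x)·d(x) holds for all x ∈ (α, β), then d is a standard derivation. -/
/-- An additive function vanishing on a nonempty open interval vanishes everywhere. -/
lemma additive_zero_on_Ioo (f : ℝ → ℝ) (hf : ∀ x y, f (x + y) = f x + f y)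
    (u v : ℝ) (huv : u < v) (h0 : ∀ x ∈ Set.Ioo u v, f x = 0) : ∀ x, f x = 0 := by
  have f0 : f 0 = 0 := by have := hf 0 0; simp at this; linarith
  have fneg : ∀ x, f (-x) = - f x := by
    intro x
    have := hf x (-x)
    simp [f0] at this
    linarith
  have hsmall : ∀ x, 0 < x → x < v - u → f x = 0 := by
    intro x hx hxv
    set t := (u + (v - x)) / 2 with htdef
    have h1 : u < t := by rw [htdef]; linarith
    have h2 : t < v - x := by rw [htdef]; linarith
    have hxt : f (x + t) = f x + f t := hf x t
    have e1 : f t = 0 := h0 t ⟨h1, by linarith⟩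
    have e2 : f (x + t) = 0 := h0 (x + t) ⟨by linarith, by linarith⟩
    linarith
  have hnsmul : ∀ (n : ℕ) (x : ℝ), f (n * x) = n * f x := by
    intro n
    induction n with
    | zero => intro x; simpa using f0
    | succ k ih => intro x; push_cast; rw [add_mul, one_mul, hf, ih]; ring
  intro x
  obtain ⟨n, hn⟩ := exists_nat_gt (|x| / ((v - u) / 2))
  have hd2 : 0 < (v - u) / 2 := by linarith
  have hnpos : 0 < (n : ℝ) := lt_of_le_of_lt (div_nonneg (abs_nonneg x) hd2.le) hn
  have hxn : |x / n| < (v - u) / 2 := by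
    rw [abs_div, abs_of_pos hnpos]
    rw [div_lt_iff₀ hnpos]
    rw [div_lt_iff₀ hd2] at hn
    linarith
  have hzero : f (x / n) = 0 := by
    rcases lt_trichotomy (x / n) 0 with hlt | heq | hgt
    · have : f (-(x / n)) = 0 := by
        apply hsmall _ (by linarith)
        have := abs_lt.mp hxn
        linarith
      rw [fneg] at this; linarith
    · rw [heq, f0]
    · apply hsmall _ hgt
      have := abs_lt.mp hxn
      linarith
  have : f (n * (x / n)) = n * f (x / n) := hnsmul n (x / n)
  rw [mul_div_cancel₀ x (ne_of_gt hnpos)] at this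
  rw [this, hzero, mul_zero]

/-- If an additive function `d` derivates the exponential function on `(α, β)` with
`2α < β` and `α < 2β`, then `d` is a standard derivation. -/
theorem stmt_8 (d : ℝ → ℝ) (hd : ∀ x y : ℝ, d (x + y) = d x + d y)
    (α β : ℝ) (h1 : 2 * α < β) (h2 : α < 2 * β)
    (h : ∀ x ∈ Set.Ioo α β, d (Real.exp x) = Real.exp x * d x) :
    ∀ x y : ℝ, d (x * y) = d x * y + x * d y := by
  set D : ℝ → ℝ → ℝ := fun a b => d (a * b) - a * d b - b * d a with hD
  have Dadd_left : ∀ a a' b, D (a + a') b = D a b + D a' b := by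
    intro a a' b
    simp only [hD]
    rw [add_mul, hd, hd]
    ring
  have Dadd_right : ∀ a b b', D a (b + b') = D a b + D a b' := by
    intro a b b'
    simp only [hD]
    rw [mul_add, hd, hd]
    ring
  set x₀ : ℝ := (α + β) / 3 with hx₀
  set ε : ℝ := min (min (x₀ - α) (β - x₀)) (min ((2 * x₀ - α) / 2) ((β - 2 * x₀) / 2)) with hε
  have e1 : ε ≤ x₀ - α := le_trans (min_le_left _ _) (min_le_left _ _)
  have e2 : ε ≤ β - x₀ := le_trans (min_le_left _ _) (min_le_right _ _)
  have e3 : ε ≤ (2 * x₀ - α) / 2 := le_trans (min_le_right _ _) (min_le_left _ _)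
  have e4 : ε ≤ (β - 2 * x₀) / 2 := le_trans (min_le_right _ _) (min_le_right _ _)
  have hεpos : 0 < ε := by
    apply lt_min (lt_min _ _) (lt_min _ _) <;> rw [hx₀] <;> linarith
  -- key: D vanishes on J × J where J = Ioo (exp (x₀ - ε)) (exp (x₀ + ε))
  have hEE : Real.exp (x₀ - ε) < Real.exp (x₀ + ε) := Real.exp_lt_exp.mpr (by linarith)
  have key : ∀ a ∈ Set.Ioo (Real.exp (x₀ - ε)) (Real.exp (x₀ + ε)),
      ∀ b ∈ Set.Ioo (Real.exp (x₀ - ε)) (Real.exp (x₀ + ε)), D a b = 0 := by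
    intro a ha b hb
    have hapos : 0 < a := lt_trans (Real.exp_pos _) ha.1
    have hbpos : 0 < b := lt_trans (Real.exp_pos _) hb.1
    set x := Real.log a with hx
    set y := Real.log b with hy
    have hax : a = Real.exp x := (Real.exp_log hapos).symm
    have hby : b = Real.exp y := (Real.exp_log hbpos).symm
    have hxI : x₀ - ε < x ∧ x < x₀ + ε := by
      constructor
      · calc x₀ - ε = Real.log (Real.exp (x₀ - ε)) := (Real.log_exp _).symm
          _ < x := Real.log_lt_log (Real.exp_pos _) ha.1
      · calc x = Real.log a := rfl
          _ < Real.log (Real.exp (x₀ + ε)) := Real.log_lt_log hapos ha.2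
          _ = x₀ + ε := Real.log_exp _
    have hyI : x₀ - ε < y ∧ y < x₀ + ε := by
      constructor
      · calc x₀ - ε = Real.log (Real.exp (x₀ - ε)) := (Real.log_exp _).symm
          _ < y := Real.log_lt_log (Real.exp_pos _) hb.1
      · calc y = Real.log b := rfl
          _ < Real.log (Real.exp (x₀ + ε)) := Real.log_lt_log hbpos hb.2
          _ = x₀ + ε := Real.log_exp _
    have hxmem : x ∈ Set.Ioo α β := ⟨by linarith [hxI.1], by linarith [hxI.2]⟩
    have hymem : y ∈ Set.Ioo α β := ⟨by linarith [hyI.1], by linarith [hyI.2]⟩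
    have hxymem : x + y ∈ Set.Ioo α β :=
      ⟨by linarith [hxI.1, hyI.1], by linarith [hxI.2, hyI.2]⟩
    have hxy : d (Real.exp x * Real.exp y) = Real.exp x * d (Real.exp y)
        + Real.exp y * d (Real.exp x) := by
      rw [← Real.exp_add, h _ hxymem, hd, h _ hxmem, h _ hymem, Real.exp_add]
      ring
    simp only [hD]
    rw [hax, hby, hxy]
    ring
  -- step 1: D a b = 0 for all a, b ∈ J
  have step1 : ∀ b ∈ Set.Ioo (Real.exp (x₀ - ε)) (Real.exp (x₀ + ε)), ∀ a, D a b = 0 := by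
    intro b hb
    exact additive_zero_on_Ioo (fun a => D a b) (fun a a' => Dadd_left a a' b)
      _ _ hEE (fun a ha => key a ha b hb)
  -- step 2: D a b = 0 for all a, b
  have step2 : ∀ a b, D a b = 0 := by
    intro a
    exact additive_zero_on_Ioo (fun b => D a b) (fun b b' => Dadd_right a b b')
      _ _ hEE (fun b hb => step1 b hb a)
  intro x y
  have := step2 x y
  simp only [hD] at this
  linarith
end

section
/- Let d : ℝ → ℝ be an additive function and let α, β ∈ ℝ satisfy α < 0 < β. If d(sinh(x)) = cosh(x)·d(x) holds for all x ∈ (α, β), then d is a standard derivation. -/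
/-- If an additive function `d` derivates `sinh` on `(α, β)` with `α < 0 < β`,
then `d` is a standard derivation. -/
theorem stmt_9 (d : ℝ → ℝ) (hd : ∀ x y : ℝ, d (x + y) = d x + d y)
    (α β : ℝ) (h1 : α < 0) (h2 : 0 < β)
    (h : ∀ x ∈ Set.Ioo α β, d (Real.sinh x) = Real.cosh x * d x) :
    ∀ x y : ℝ, d (x * y) = d x * y + x * d y := by
  have hd0 : d 0 = 0 := by have := hd 0 0; norm_num at this; linarith
  have hneg : ∀ x, d (-x) = -d x := by
    intro x
    have h' := hd x (-x)
    rw [add_neg_cancel, hd0] at h'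
    linarith
  have hsub : ∀ a b : ℝ, d (a - b) = d a - d b := by
    intro a b
    rw [sub_eq_add_neg, hd, hneg]
    ring
  set m := min (-α) β with hm_def
  have hm : 0 < m := lt_min (by linarith) h2
  have hmem : ∀ t : ℝ, |t| < m → d (Real.sinh t) = Real.cosh t * d t := by
    intro t ht
    rw [abs_lt] at ht
    refine h t ⟨?_, ?_⟩
    · have : m ≤ -α := min_le_left _ _
      linarith [ht.1]
    · have : m ≤ β := min_le_right _ _
      linarith [ht.2]
  set r := m / 3 with hr_def
  have hr : 0 < r := by positivity
  -- two-variable formulas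
  have P2a : ∀ x y : ℝ, |x| + |y| < m →
      d (Real.sinh x * Real.cosh y)
        = Real.cosh x * Real.cosh y * d x + Real.sinh x * Real.sinh y * d y := by
    intro x y hxy
    have b1 : |x + y| < m := lt_of_le_of_lt (abs_add_le x y) hxy
    have b2 : |x - y| < m := lt_of_le_of_lt (abs_sub x y) hxy
    have e1 := hmem (x + y) b1
    have e2 := hmem (x - y) b2
    rw [Real.sinh_add, Real.cosh_add, hd, hd] at e1
    rw [Real.sinh_sub, Real.cosh_sub, hsub, hsub] at e2
    linear_combination (e1 + e2) / 2
  -- three-variable formula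
  have P3 : ∀ x y z : ℝ, |x| + |y| + |z| < m →
      d (Real.sinh x * Real.sinh y * Real.sinh z)
        = Real.cosh x * Real.sinh y * Real.sinh z * d x
          + Real.sinh x * Real.cosh y * Real.sinh z * d y
          + Real.sinh x * Real.sinh y * Real.cosh z * d z := by
    intro x y z hb
    have b1 : |x| + |y + z| < m := by
      have := abs_add_le y z; linarith
    have b2 : |x| + |y - z| < m := by
      have := abs_sub y z; linarith
    have f1 := P2a x (y + z) b1
    have f2 := P2a x (y - z) b2
    rw [hd] at f1
    rw [hsub] at f2
    have split1 : d (Real.sinh x * Real.cosh (y + z))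
        = d (Real.sinh x * Real.cosh y * Real.cosh z)
          + d (Real.sinh x * Real.sinh y * Real.sinh z) := by
      rw [← hd]; congr 1; rw [Real.cosh_add]; ring
    have split2 : d (Real.sinh x * Real.cosh (y - z))
        = d (Real.sinh x * Real.cosh y * Real.cosh z)
          - d (Real.sinh x * Real.sinh y * Real.sinh z) := by
      rw [← hsub]; congr 1; rw [Real.cosh_sub]; ring
    rw [split1, Real.cosh_add, Real.sinh_add] at f1
    rw [split2, Real.cosh_sub, Real.sinh_sub] at f2
    linear_combination (f1 - f2) / 2
  -- the key identity for arbitrary small u, v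
  have KEY : ∀ u v z : ℝ, |u| < Real.sinh r → |v| < Real.sinh r → |z| < r →
      d (u * v * Real.sinh z)
        = Real.sinh z * (v * d u + u * d v) + u * v * (Real.cosh z * d z) := by
    intro u v z hu hv hz
    have hax : |Real.arsinh u| < r := by
      rw [abs_lt] at hu ⊢
      constructor
      · have := (Real.arsinh_lt_arsinh (x := -Real.sinh r) (y := u)).2 hu.1
        rwa [← Real.sinh_neg, Real.arsinh_sinh] at this
      · have := (Real.arsinh_lt_arsinh (x := u) (y := Real.sinh r)).2 hu.2
        rwa [Real.arsinh_sinh] at this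
    have hay : |Real.arsinh v| < r := by
      rw [abs_lt] at hv ⊢
      constructor
      · have := (Real.arsinh_lt_arsinh (x := -Real.sinh r) (y := v)).2 hv.1
        rwa [← Real.sinh_neg, Real.arsinh_sinh] at this
      · have := (Real.arsinh_lt_arsinh (x := v) (y := Real.sinh r)).2 hv.2
        rwa [Real.arsinh_sinh] at this
    have hb : |Real.arsinh u| + |Real.arsinh v| + |z| < m := by
      have : r + r + r = m := by rw [hr_def]; ring
      linarith
    have key := P3 (Real.arsinh u) (Real.arsinh v) z hb
    rw [Real.sinh_arsinh, Real.sinh_arsinh] at key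
    have hrm : r < m := by rw [hr_def]; linarith
    have hu' := hmem (Real.arsinh u) (lt_trans hax hrm)
    have hv' := hmem (Real.arsinh v) (lt_trans hay hrm)
    rw [Real.sinh_arsinh] at hu' hv'
    linear_combination key - Real.sinh z * v * hu' - Real.sinh z * u * hv'
  -- choose the small parameter ε
  set w := min r 1 / 2 with hw_def
  have hw0 : 0 < w := by
    have : 0 < min r 1 := lt_min hr one_pos
    positivity
  have hwr : w < r := by
    have h1' : min r 1 ≤ r := min_le_left _ _
    have : w ≤ r / 2 := by rw [hw_def]; linarith
    linarith
  have hwhalf : w ≤ 1 / 2 := by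
    have : min r 1 ≤ 1 := min_le_right _ _
    rw [hw_def]; linarith
  set ε := Real.sinh w with hε_def
  have hε0 : 0 < ε := Real.sinh_pos_iff.2 hw0
  have hεr : ε < Real.sinh r := Real.sinh_lt_sinh.2 hwr
  have hε1 : ε < 1 := by
    have hmono : ε ≤ Real.sinh (1/2) := Real.sinh_le_sinh.2 hwhalf
    have hexp : Real.exp (1/2) * Real.exp (1/2) = Real.exp 1 := by
      rw [← Real.exp_add]; norm_num
    have he1 : Real.exp 1 < 2.7182818286 := Real.exp_one_lt_d9
    have hp : 0 < Real.exp (1/2) := Real.exp_pos _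
    have hp2 : 0 < Real.exp (-(1/2) : ℝ) := Real.exp_pos _
    have hlt : Real.exp (1/2) < 2 := by nlinarith
    have : Real.sinh (1/2) < 1 := by
      rw [Real.sinh_eq]
      norm_num
      nlinarith
    linarith
  have hεw : d ε = Real.cosh w * d w := by
    have hb : |w| < m := by
      rw [abs_of_pos hw0]
      have : r < m := by rw [hr_def]; linarith
      linarith
    exact hmem w hb
  have hwabs : |w| < r := by rw [abs_of_pos hw0]; exact hwr
  -- Step 1
  have S1 : ∀ a b : ℝ, |a| ≤ ε → |b| ≤ ε →
      d (a * b * ε) = ε * (b * d a + a * d b) + a * b * d ε := by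
    intro a b ha hb
    have k := KEY a b w (lt_of_le_of_lt ha hεr) (lt_of_le_of_lt hb hεr) hwabs
    rw [← hε_def] at k
    linear_combination k + a * b * hεw.symm
  -- Step 2 (exchange identity)
  have S2 : ∀ u v : ℝ, |u| ≤ ε → |v| ≤ ε →
      v * d (u * ε) + u * ε * d v = v * ε * d u + u * d (v * ε) := by
    intro u v hu hv
    have hu' : |u * ε| ≤ ε := by
      rw [abs_mul, abs_of_pos hε0]
      nlinarith [abs_nonneg u]
    have hv' : |v * ε| ≤ ε := by
      rw [abs_mul, abs_of_pos hε0]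
      nlinarith [abs_nonneg v]
    have k1 := KEY (u * ε) v w (lt_of_le_of_lt hu' hεr) (lt_of_le_of_lt hv hεr) hwabs
    have k2 := KEY u (v * ε) w (lt_of_le_of_lt hu hεr) (lt_of_le_of_lt hv' hεr) hwabs
    rw [← hε_def] at k1 k2
    rw [show u * ε * v * ε = u * (v * ε) * ε from by ring] at k1
    have E : ε * (v * d (u * ε) + u * ε * d v) = ε * (v * ε * d u + u * d (v * ε)) := by
      linear_combination k2 - k1
    exact mul_left_cancel₀ hε0.ne' E
  have habs : |ε| ≤ ε := le_of_eq (abs_of_pos hε0)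
  have hεε : |ε * ε| ≤ ε := by
    rw [abs_mul, abs_of_pos hε0]; nlinarith
  -- d(ε³) and d(ε²)
  have h3 : d (ε * ε * ε) = 3 * ε ^ 2 * d ε := by
    have := S1 ε ε habs habs
    linear_combination this
  have h4 : d (ε * ε) = 2 * ε * d ε := by
    have e2 := S2 (ε * ε) ε hεε habs
    have E : (2 * ε ^ 2) * d (ε * ε) = (2 * ε ^ 2) * (2 * ε * d ε) := by
      linear_combination (-1 : ℝ) * e2 + ε * h3
    have h2ε : (2 * ε ^ 2) ≠ 0 := by positivity
    exact mul_left_cancel₀ h2ε E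
  -- Leibniz on small elements
  have h5 : ∀ a b : ℝ, |a| ≤ ε → |b| ≤ ε → d (a * b) = b * d a + a * d b := by
    intro a b ha hb
    have hab : |a * b| ≤ ε := by
      rw [abs_mul]
      nlinarith [abs_nonneg a, abs_nonneg b]
    have e1 := S1 a b ha hb
    have e2 := S2 (a * b) (ε * ε) hab hεε
    have E : ε ^ 3 * d (a * b) = ε ^ 3 * (b * d a + a * d b) := by
      linear_combination ε ^ 2 * e1 - e2 - (a * b) * h3 + (a * b * ε) * h4
    exact mul_left_cancel₀ (pow_ne_zero 3 hε0.ne') E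
  -- natural multiples
  have hdn : ∀ (k : ℕ) (t : ℝ), d ((k : ℝ) * t) = (k : ℝ) * d t := by
    intro k
    induction k with
    | zero => intro t; norm_num [hd0]
    | succ k ih =>
      intro t
      push_cast
      rw [add_mul, one_mul, hd, ih]
      ring
  -- conclude
  intro x y
  obtain ⟨n, hn⟩ := exists_nat_gt (max |x| |y| / ε)
  have hn0 : (0 : ℝ) < n := lt_of_le_of_lt (by positivity) hn
  have hmax : max |x| |y| < n * ε := by
    rw [div_lt_iff₀ hε0] at hn
    linarith
  have ha : |x / n| ≤ ε := by
    rw [abs_div, Nat.abs_cast, div_le_iff₀ hn0]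
    have := le_max_left |x| |y|
    linarith
  have hb : |y / n| ≤ ε := by
    rw [abs_div, Nat.abs_cast, div_le_iff₀ hn0]
    have := le_max_right |x| |y|
    linarith
  have hx : x = (n : ℝ) * (x / n) := by field_simp
  have hy : y = (n : ℝ) * (y / n) := by field_simp
  have hxy : x * y = (n : ℝ) * ((n : ℝ) * ((x / n) * (y / n))) := by
    field_simp
  have dxx : d x = (n : ℝ) * d (x / n) := by
    nth_rewrite 1 [hx]
    rw [hdn]
  have dyy : d y = (n : ℝ) * d (y / n) := by
    nth_rewrite 1 [hy]
    rw [hdn]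
  have hab := h5 (x / n) (y / n) ha hb
  have hnne : (n : ℝ) ≠ 0 := hn0.ne'
  calc d (x * y) = (n : ℝ) * ((n : ℝ) * d ((x / n) * (y / n))) := by
        rw [hxy, hdn, hdn]
    _ = d x * y + x * d y := by
        rw [hab, dxx, dyy]
        field_simp
end

section
/- Let d : ℝ → ℝ be an additive function and let α, β ∈ ℝ satisfy either 0 < 2α < β or α < 2β < 0. If d(cosh(x)) = sinh(x)·d(x) holds for all x ∈ (α, β), then d is a standard derivation. -/
private theorem stmt_10_aux (d : ℝ → ℝ) (hd : ∀ x y : ℝ, d (x + y) = d x + d y)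
    (α β : ℝ) (hα : 0 < 2 * α) (hβ : 2 * α < β)
    (h : ∀ x ∈ Set.Ioo α β, d (Real.cosh x) = Real.sinh x * d x) :
    ∀ x y : ℝ, d (x * y) = d x * y + x * d y := by
  have hα0 : 0 < α := by linarith
  have hβ0 : 0 < β := by linarith
  have hd0 : d 0 = 0 := by have := hd 0 0; simp at this; linarith
  have hq : ∀ (q : ℚ) (x : ℝ), d ((q : ℝ) * x) = (q : ℝ) * d x := by
    intro q x
    simpa [smul_eq_mul] using map_ratCast_smul (AddMonoidHom.mk' d hd) ℝ ℝ q x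
  -- the square law on an interval of cosh values
  set a := Real.cosh α with ha
  set b := Real.cosh (β/2) with hb
  have ha1 : 1 ≤ a := Real.one_le_cosh α
  have hab : a < b := by
    rw [ha, hb]
    apply Real.cosh_lt_cosh.2
    rw [abs_of_pos hα0, abs_of_pos (by linarith : (0:ℝ) < β/2)]
    linarith
  have hsq : ∀ u ∈ Set.Ioo a b, 2 * (d (u * u) - 2 * u * d u) = d 1 := by
    intro u hu
    have hsub := intermediate_value_Ioo (by linarith : α ≤ β/2)
      Real.continuous_cosh.continuousOn
    obtain ⟨x, hx, rfl⟩ := hsub hu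
    have hx1 : x ∈ Set.Ioo α β := ⟨hx.1, by linarith [hx.2]⟩
    have hx2 : 2 * x ∈ Set.Ioo α β := ⟨by linarith [hx.1], by linarith [hx.2]⟩
    have hd2x : d (2 * x) = 2 * d x := by
      have := hd x x; rw [two_mul]; linarith
    have hA : d (Real.cosh (2 * x)) = 2 * Real.sinh x * Real.cosh x * (2 * d x) := by
      rw [h (2 * x) hx2, Real.sinh_two_mul, hd2x]
    have e1 : Real.cosh (2 * x) + 1 = Real.cosh x * Real.cosh x + Real.cosh x * Real.cosh x := by
      have h1 := Real.cosh_two_mul x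
      have h2 := Real.cosh_sq_sub_sinh_sq x
      nlinarith [h1, h2]
    have e2 := hd (Real.cosh (2 * x)) 1
    rw [e1] at e2
    have e3 := hd (Real.cosh x * Real.cosh x) (Real.cosh x * Real.cosh x)
    have hC := h x hx1
    rw [hC]
    linear_combination e2 - e3 + hA
  -- d 1 = 0
  have hone : d 1 = 0 := by
    set u := (a + b) / 2 with hu
    have hum : u ∈ Set.Ioo a b := ⟨by simp [hu]; linarith, by simp [hu]; linarith⟩
    have hu0 : 0 < u := by simp [hu]; nlinarith
    obtain ⟨q, hq1, hq2⟩ := exists_rat_btwn (show (1:ℝ) < b / u by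
      rw [lt_div_iff₀ hu0]; simpa using hum.2)
    have hqu : (q : ℝ) * u ∈ Set.Ioo a b :=
      ⟨by nlinarith [hum.1], by rw [lt_div_iff₀ hu0] at hq2; linarith [hq2]⟩
    have h1 := hsq u hum
    have h2 := hsq ((q : ℝ) * u) hqu
    have e1 : ((q : ℝ) * u) * ((q : ℝ) * u) = ((q * q : ℚ) : ℝ) * (u * u) := by
      push_cast; ring
    rw [e1, hq (q * q), hq q] at h2
    push_cast at h2
    have key : ((q : ℝ) * (q : ℝ) - 1) * d 1 = 0 := by linear_combination h2 - (q:ℝ)*(q:ℝ)*h1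
    have hqgt : (1 : ℝ) < (q : ℝ) := hq1
    have : (q : ℝ) * (q : ℝ) - 1 ≠ 0 := by nlinarith
    exact (mul_eq_zero.1 key).resolve_left this
  -- square law everywhere
  have hneg : ∀ x : ℝ, d (-x) = -d x := by
    intro x
    have := hd x (-x)
    simp [hd0] at this
    linarith
  have hallpos : ∀ x : ℝ, 0 < x → d (x * x) = 2 * x * d x := by
    intro x hx
    have : ∃ q : ℚ, (q : ℝ) * x ∈ Set.Ioo a b := by
      obtain ⟨q, hq1, hq2⟩ := exists_rat_btwn (show a / x < b / x by gcongr)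
      exact ⟨q, (div_lt_iff₀ hx).1 hq1, (lt_div_iff₀ hx).1 hq2⟩
    obtain ⟨q, hqm⟩ := this
    have hq0 : (q : ℝ) ≠ 0 := by
      intro hq0
      rw [hq0, zero_mul] at hqm
      have := hqm.1; linarith
    have h2 := hsq ((q : ℝ) * x) hqm
    have e1 : ((q : ℝ) * x) * ((q : ℝ) * x) = ((q * q : ℚ) : ℝ) * (x * x) := by
      push_cast; ring
    rw [e1, hq (q * q), hq q, hone] at h2
    push_cast at h2
    have h3 : (q : ℝ) * (q : ℝ) * (2 * (d (x * x) - 2 * x * d x)) = 0 := by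
      linear_combination h2
    have := mul_eq_zero.1 h3
    rcases this with h4 | h4
    · exact absurd (mul_eq_zero.1 h4) (by simp [hq0])
    · linarith
  have hall : ∀ x : ℝ, d (x * x) = 2 * x * d x := by
    intro x
    rcases lt_trichotomy x 0 with hx | rfl | hx
    · have e1 : x * x = (-x) * (-x) := by ring
      rw [e1, hallpos (-x) (by linarith), hneg]
      ring
    · simp [hd0]
    · exact hallpos x hx
  -- polarization
  intro x y
  have e1 := hall (x + y)
  have e2 := hall x
  have e3 := hall y
  have e4 : (x + y) * (x + y) = x * x + (x * y + (x * y + y * y)) := by ring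
  rw [e4, hd (x*x) _, hd (x*y) _, hd (x*y) _, hd x y] at e1
  linarith [e1, e2, e3]

/-- If an additive function `d` derivates `cosh` on `(α, β)` with `0 < 2α < β` or
`α < 2β < 0`, then `d` is a standard derivation. -/
theorem stmt_10 (d : ℝ → ℝ) (hd : ∀ x y : ℝ, d (x + y) = d x + d y)
    (α β : ℝ) (hαβ : (0 < 2 * α ∧ 2 * α < β) ∨ (α < 2 * β ∧ 2 * β < 0))
    (h : ∀ x ∈ Set.Ioo α β, d (Real.cosh x) = Real.sinh x * d x) :
    ∀ x y : ℝ, d (x * y) = d x * y + x * d y := by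
  rcases hαβ with ⟨h1, h2⟩ | ⟨h1, h2⟩
  · exact stmt_10_aux d hd α β h1 h2 h
  · have hd0 : d 0 = 0 := by have := hd 0 0; simp at this; linarith
    have hneg : ∀ x : ℝ, d (-x) = -d x := by
      intro x
      have := hd x (-x)
      simp [hd0] at this
      linarith
    apply stmt_10_aux d hd (-β) (-α) (by linarith) (by linarith)
    intro x hx
    have hmx : -x ∈ Set.Ioo α β := ⟨by linarith [hx.2], by linarith [hx.1]⟩
    have := h (-x) hmx
    rw [Real.cosh_neg, Real.sinh_neg, hneg] at this
    linarith [this]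
end

section
/- Let d : ℝ → ℝ be an additive function and let α, β ∈ ℝ satisfy α < 0 < β. If d(tanh(x)) = (1/cosh²(x))·d(x) holds for all x ∈ (α, β), then d is a standard derivation. -/
/-!
Write `u = tanh x`, so that the hypothesis reads `d x = d u / (1 - u²)` near `0`. The addition law
`tanh (x + y) = (u + t) / (1 + u t)` turns additivity of `d` in `x` into a relation between `d u`
and `d t`. When `u t = r` is rational, `ℚ`-linearity of `d` takes care of the division by `1 + r`
and the relation collapses to `t d u + u d t = 0`; with `t = r / u` this is the inverse rule
`d (u⁻¹) = -d u / u²` for small `u`, and rational rescaling extends it to all `u ≠ 0`.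
An additive map obeying the inverse rule is a derivation: the partial fraction decomposition
`1 / (x² - x) = 1 / (x - 1) - 1 / x` yields `d (x²) = 2 x d x`, and polarization gives Leibniz.
-/

open Real

namespace Real

theorem one_div_cosh_sq (x : ℝ) : 1 / cosh x ^ 2 = 1 - tanh x ^ 2 := by
  have := cosh_sq_sub_sinh_sq x
  rw [tanh_eq_sinh_div_cosh]
  field_simp
  linarith

theorem tanh_add_mul (x y : ℝ) :
    tanh (x + y) * (1 + tanh x * tanh y) = tanh x + tanh y := by
  have := (cosh_pos x).ne'
  have := (cosh_pos y).ne'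
  have := (cosh_pos (x + y)).ne'
  simp only [tanh_eq_sinh_div_cosh]
  field_simp
  rw [sinh_add, cosh_add]
  ring

theorem tanh_pos {x : ℝ} (hx : 0 < x) : 0 < tanh x := by
  rw [tanh_eq_sinh_div_cosh]
  exact div_pos (sinh_pos_iff.2 hx) (cosh_pos x)

theorem abs_artanh_le {u r : ℝ} (hu : |u| ≤ tanh r) : |artanh u| ≤ r := by
  obtain ⟨hl, hr⟩ := abs_le.1 hu
  rw [abs_le]
  constructor
  · calc -r = artanh (-tanh r) := by rw [← tanh_neg, artanh_tanh]
      _ ≤ artanh u :=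
          artanh_le_artanh (neg_lt_neg (tanh_lt_one r)) (hr.trans_lt (tanh_lt_one r)) hl
  · calc artanh u ≤ artanh (tanh r) :=
          artanh_le_artanh ((neg_lt_neg (tanh_lt_one r)).trans_le hl) (tanh_lt_one r) hr
      _ = r := artanh_tanh r

end Real

namespace AddMonoidHom

section Field

variable {K : Type*} [Field K] (d : K →+ K)

theorem map_ratCast_mul (q : ℚ) (x : K) : d (q * x) = q * d x := by
  simpa only [smul_eq_mul] using map_ratCast_smul d K K q x

variable [CharZero K]

theorem map_inv_of_map_inv_ratCast_mul {q : ℚ} (hq : q ≠ 0) {v : K}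
    (h : d (q * v)⁻¹ = -d (q * v) / (q * v) ^ 2) : d v⁻¹ = -d v / v ^ 2 := by
  have hq' : (q : K) ≠ 0 := Rat.cast_ne_zero.2 hq
  rw [mul_inv, ← Rat.cast_inv, map_ratCast_mul, map_ratCast_mul, Rat.cast_inv] at h
  field_simp at h
  rwa [one_div, ← neg_div] at h

theorem map_one_of_map_inv (hinv : ∀ x ≠ 0, d x⁻¹ = -d x / x ^ 2) : d 1 = 0 := by
  have h := hinv 1 one_ne_zero
  rw [inv_one, one_pow, div_one, eq_neg_iff_add_eq_zero, ← two_mul] at h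
  exact (mul_eq_zero.1 h).resolve_left two_ne_zero

theorem map_sq_of_map_inv (hinv : ∀ x ≠ 0, d x⁻¹ = -d x / x ^ 2) (x : K) :
    d (x ^ 2) = 2 * x * d x := by
  rcases eq_or_ne x 0 with rfl | hx
  · simp
  rcases eq_or_ne x 1 with rfl | hx1
  · simp [map_one_of_map_inv d hinv]
  have hx1' : x - 1 ≠ 0 := sub_ne_zero.2 hx1
  have hsq : x ^ 2 - x ≠ 0 := by
    rw [show x ^ 2 - x = x * (x - 1) by ring]
    exact mul_ne_zero hx hx1'
  have hpf : (x ^ 2 - x)⁻¹ = (x - 1)⁻¹ - x⁻¹ := by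
    field_simp
    ring
  have h := congrArg d hpf
  rw [map_sub, hinv _ hsq, hinv _ hx1', hinv _ hx, map_sub, map_sub, map_one_of_map_inv d hinv,
    sub_zero] at h
  field_simp at h
  linear_combination -h

theorem map_mul_of_map_inv (hinv : ∀ x ≠ 0, d x⁻¹ = -d x / x ^ 2) (x y : K) :
    d (x * y) = d x * y + x * d y := by
  have hsq := map_sq_of_map_inv d hinv
  have h := hsq (x + y)
  rw [show (x + y) ^ 2 = x ^ 2 + (x * y + x * y) + y ^ 2 by ring, map_add, map_add, map_add,
    map_add, hsq, hsq] at h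
  have h2 : (2 : K) * (d (x * y) - (d x * y + x * d y)) = 0 := by linear_combination h
  exact sub_eq_zero.1 ((mul_eq_zero.1 h2).resolve_left two_ne_zero)

end Field

theorem map_inv_of_map_inv_of_abs_lt {K : Type*} [Field K] [LinearOrder K] [IsStrictOrderedRing K]
    [Archimedean K] (d : K →+ K) {δ : K} (hδ : 0 < δ)
    (h : ∀ u ≠ 0, |u| < δ → d u⁻¹ = -d u / u ^ 2) {v : K} (hv : v ≠ 0) :
    d v⁻¹ = -d v / v ^ 2 := by
  obtain ⟨q, hq0, hq⟩ := exists_rat_btwn (div_pos hδ (abs_pos.2 hv))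
  refine d.map_inv_of_map_inv_ratCast_mul (Rat.cast_pos.1 hq0).ne' (h _ (mul_ne_zero hq0.ne' hv) ?_)
  rw [abs_mul, abs_of_pos hq0]
  exact (lt_div_iff₀ (abs_pos.2 hv)).1 hq

section Tanh

variable (d : ℝ →+ ℝ) {ε : ℝ}

theorem tanh_add_mul_map_eq_zero (h : ∀ x, |x| ≤ ε → d (tanh x) = (1 - tanh x ^ 2) * d x)
    {x y : ℝ} (hx : |x| ≤ ε / 2) (hy : |y| ≤ ε / 2) {r : ℚ} (hr : tanh x * tanh y = r) :
    (tanh x + tanh y) * (tanh y * d (tanh x) + tanh x * d (tanh y)) = 0 := by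
  have hw := tanh_add_mul x y
  have hs := h x (by linarith [abs_nonneg x])
  have ht := h y (by linarith [abs_nonneg y])
  have hxy := h (x + y) ((abs_add_le x y).trans (by linarith))
  rw [map_add] at hxy
  rw [hs, ht]
  set s := tanh x
  set t := tanh y
  set w := tanh (x + y)
  rcases eq_or_ne (1 + s * t) 0 with h0 | h0
  · rw [h0, mul_zero] at hw
    rw [← hw, zero_mul]
  -- `1 + s * t` is rational, so `d` commutes with dividing by it
  have hdw : (1 + s * t) * d w = (1 - s ^ 2) * d x + (1 - t ^ 2) * d y := by
    have hwq : w = ((1 + r)⁻¹ : ℚ) * (s + t) := by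
      push_cast
      rw [← hr, ← hw]
      field_simp
    rw [hwq, map_ratCast_mul, map_add, hs, ht]
    push_cast
    rw [← hr]
    field_simp
  linear_combination (1 + s * t) ^ 2 * hxy - (d x + d y) * (w * (1 + s * t) + (s + t)) * hw
    - (1 + s * t) * hdw

theorem map_inv_of_map_tanh (h : ∀ x, |x| ≤ ε → d (tanh x) = (1 - tanh x ^ 2) * d x)
    {u : ℝ} (hu0 : u ≠ 0) (hu : |u| < tanh (ε / 2)) :
    d u⁻¹ = -d u / u ^ 2 := by
  set δ := tanh (ε / 2)
  have hδ1 : δ < 1 := tanh_lt_one _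
  have habs : 0 < |u| := abs_pos.2 hu0
  obtain ⟨r, hr0, hr⟩ := exists_rat_btwn (mul_pos habs (habs.trans hu))
  set t := (r : ℝ) * u⁻¹ with ht_def
  have htu : t * u = r := inv_mul_cancel_right₀ hu0 _
  have ht : |t| < δ := by
    rw [abs_mul, abs_inv, abs_of_pos hr0, ← div_eq_mul_inv, div_lt_iff₀ habs]
    linarith
  have hu1 : u ∈ Set.Ioo (-1) 1 := abs_lt.1 (hu.trans hδ1)
  have ht1 : t ∈ Set.Ioo (-1) 1 := abs_lt.1 (ht.trans hδ1)
  have key := d.tanh_add_mul_map_eq_zero h (abs_artanh_le hu.le) (abs_artanh_le ht.le) (r := r)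
    (by rw [tanh_artanh hu1, tanh_artanh ht1, mul_comm, htu])
  rw [tanh_artanh hu1, tanh_artanh ht1] at key
  have hut : u + t ≠ 0 := by
    intro h0
    rw [show t = -u by linarith] at htu
    nlinarith [sq_nonneg u]
  have key' := (mul_eq_zero.1 key).resolve_left hut
  rw [ht_def, map_ratCast_mul] at key'
  field_simp at key'
  have hinv := (mul_eq_zero.1 (key'.trans (mul_zero u))).resolve_left hr0.ne'
  rw [one_div] at hinv
  rw [eq_div_iff (pow_ne_zero 2 hu0)]
  linear_combination hinv

end Tanh

end AddMonoidHom

/-- If an additive function `d` derivates `tanh` on `(α, β)` with `α < 0 < β`,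
then `d` is a standard derivation. -/
theorem stmt_11 (d : ℝ → ℝ) (hd : ∀ x y : ℝ, d (x + y) = d x + d y)
    (α β : ℝ) (h1 : α < 0) (h2 : 0 < β)
    (h : ∀ x ∈ Set.Ioo α β, d (Real.tanh x) = (1 / (Real.cosh x) ^ 2) * d x) :
    ∀ x y : ℝ, d (x * y) = d x * y + x * d y := by
  let D : ℝ →+ ℝ := AddMonoidHom.mk' d hd
  obtain ⟨ε, hε, hball⟩ := Metric.nhds_basis_closedBall.mem_iff.1 (Ioo_mem_nhds h1 h2)
  have htanh : ∀ x, |x| ≤ ε → D (tanh x) = (1 - tanh x ^ 2) * D x := fun x hx => by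
    rw [← one_div_cosh_sq]
    exact h x (hball (mem_closedBall_zero_iff.2 hx))
  have hinv : ∀ v ≠ 0, D v⁻¹ = -D v / v ^ 2 := fun v hv =>
    D.map_inv_of_map_inv_of_abs_lt (tanh_pos (half_pos hε))
      (fun _ hu0 hu => D.map_inv_of_map_tanh htanh hu0 hu) hv
  exact D.map_mul_of_map_inv hinv
end

section
/- Let d : ℝ → ℝ be an additive function and let α, β ∈ ℝ satisfy α < 0 < β. If d(sin(x)) = cos(x)·d(x) holds for all x ∈ (α, β), then d is a standard derivation. -/
/-!
For `x` near `0`, applying the hypothesis at `x` and at `3 * x` and using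
`4 sin³ x = 3 sin x - sin 3x` together with `cos 3x = 4 cos³ x - 3 cos x` gives
`d (sin³ x) = 3 sin² x · d (sin x)`, i.e. `d (t³) = 3 t² d t` for `t` near `0`.
Since `d` is `ℚ`-linear and both sides are homogeneous of degree `3`, rescaling `t` by
`1 / N` spreads this cube rule to all of `ℝ`. Expanding `(t + 1)³` turns it into the
square rule `d (t²) = 2 t d t`, and polarizing `(x + y)²` gives the Leibniz rule.
-/

open Filter Topology Real

namespace AddMonoidHom

section Semiring

variable {K : Type*} [Semiring K] (f : K →+ K)

theorem map_natCast_mul (n : ℕ) (x : K) : f (n * x) = n * f x := by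
  simpa using map_natCast_smul f K K n x

theorem map_ofNat_mul (n : ℕ) [n.AtLeastTwo] (x : K) :
    f (OfNat.ofNat n * x) = OfNat.ofNat n * f x :=
  f.map_natCast_mul n x

end Semiring

theorem map_inv_natCast_mul {K : Type*} [DivisionSemiring K] (f : K →+ K) (n : ℕ) (x : K) :
    f ((n : K)⁻¹ * x) = (n : K)⁻¹ * f x := by
  simpa using map_inv_natCast_smul f K K n x

section Field

variable {K : Type*} [Field K] [CharZero K] (f : K →+ K)

theorem map_sq_of_map_cube (h : ∀ t, f (t ^ 3) = 3 * t ^ 2 * f t) (t : K) :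
    f (t ^ 2) = 2 * t * f t := by
  have h1 : f 1 = 0 := by
    have := h 1
    simp only [one_pow, mul_one] at this
    linear_combination -this / 2
  have hexp : f ((t + 1) ^ 3) = f (t ^ 3) + 3 * f (t ^ 2) + 3 * f t + f 1 := by
    rw [show (t + 1) ^ 3 = t ^ 3 + 3 * t ^ 2 + 3 * t + 1 by ring]
    rw [map_add, map_add, map_add, map_ofNat_mul, map_ofNat_mul]
  rw [h, h, map_add, h1] at hexp
  linear_combination -hexp / 3

theorem map_mul_of_map_sq (h : ∀ t, f (t ^ 2) = 2 * t * f t) (x y : K) :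
    f (x * y) = f x * y + x * f y := by
  have hexp : f ((x + y) ^ 2) = f (x ^ 2) + 2 * f (x * y) + f (y ^ 2) := by
    rw [add_sq, mul_assoc, map_add, map_add, map_ofNat_mul]
  rw [h, h, h, map_add] at hexp
  linear_combination -hexp / 2

end Field

theorem map_cube_of_eventually (f : ℝ →+ ℝ) (h : ∀ᶠ t in 𝓝 0, f (t ^ 3) = 3 * t ^ 2 * f t)
    (t : ℝ) : f (t ^ 3) = 3 * t ^ 2 * f t := by
  obtain ⟨δ, hδ, hball⟩ := Metric.eventually_nhds_iff.1 h
  obtain ⟨N, hN⟩ := exists_nat_gt (|t| / δ)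
  have hN0 : (0 : ℝ) < N := (div_nonneg (abs_nonneg t) hδ.le).trans_lt hN
  have hsmall : dist ((N : ℝ)⁻¹ * t) 0 < δ := by
    rw [dist_zero_right, norm_mul, norm_inv, Real.norm_natCast, Real.norm_eq_abs,
      inv_mul_lt_iff₀ hN0]
    rwa [div_lt_iff₀ hδ] at hN
  have hscaled := hball hsmall
  rw [mul_pow, inv_pow, ← Nat.cast_pow, map_inv_natCast_mul, map_inv_natCast_mul,
    Nat.cast_pow] at hscaled
  field_simp at hscaled
  linear_combination hscaled

theorem map_sin_pow_three (f : ℝ →+ ℝ) {x : ℝ} (h1 : f (sin x) = cos x * f x)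
    (h3 : f (sin (3 * x)) = cos (3 * x) * f (3 * x)) :
    f (sin x ^ 3) = 3 * sin x ^ 2 * f (sin x) := by
  have hsin : f (4 * sin x ^ 3) = f (3 * sin x) - f (sin (3 * x)) := by
    rw [← map_sub, sin_three_mul]
    ring_nf
  rw [map_ofNat_mul, map_ofNat_mul, h1, h3, map_ofNat_mul, cos_three_mul] at hsin
  rw [h1]
  linear_combination hsin / 4 - 3 * cos x * f x * sin_sq_add_cos_sq x

theorem eventually_map_cube_of_map_sin (f : ℝ →+ ℝ)
    (h : ∀ᶠ x in 𝓝 0, f (sin x) = cos x * f x) :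
    ∀ᶠ t in 𝓝 0, f (t ^ 3) = 3 * t ^ 2 * f t := by
  have h3 : ∀ᶠ x in 𝓝 0, f (sin (3 * x)) = cos (3 * x) * f (3 * x) := by
    have : Tendsto (fun x : ℝ ↦ 3 * x) (𝓝 0) (𝓝 0) := by
      simpa using (continuous_const_mul (3 : ℝ)).tendsto 0
    exact this.eventually h
  have hsin : ∀ᶠ x in 𝓝 0, f (sin x ^ 3) = 3 * sin x ^ 2 * f (sin x) :=
    (h.and h3).mono fun x hx ↦ map_sin_pow_three f hx.1 hx.2
  have harcsin : Tendsto arcsin (𝓝 0) (𝓝 0) := by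
    simpa using continuous_arcsin.tendsto 0
  filter_upwards [harcsin.eventually hsin, Icc_mem_nhds (by norm_num : (-1 : ℝ) < 0)
    (by norm_num : (0 : ℝ) < 1)] with t ht htI
  rwa [sin_arcsin htI.1 htI.2] at ht

end AddMonoidHom

/-- If an additive function `d` derivates `sin` on `(α, β)` with `α < 0 < β`,
then `d` is a standard derivation. -/
theorem stmt_13 (d : ℝ → ℝ) (hd : ∀ x y : ℝ, d (x + y) = d x + d y)
    (α β : ℝ) (h1 : α < 0) (h2 : 0 < β)
    (h : ∀ x ∈ Set.Ioo α β, d (Real.sin x) = Real.cos x * d x) :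
    ∀ x y : ℝ, d (x * y) = d x * y + x * d y := by
  let D : ℝ →+ ℝ := AddMonoidHom.mk' d hd
  have hsin : ∀ᶠ x in 𝓝 0, D (sin x) = cos x * D x :=
    eventually_of_mem (Ioo_mem_nhds h1 h2) h
  exact D.map_mul_of_map_sq <| D.map_sq_of_map_cube <| D.map_cube_of_eventually <|
    D.eventually_map_cube_of_map_sin hsin
end

section
/- Let d : ℝ → ℝ be an additive function and let α, β ∈ ℝ satisfy either 0 < 2α < π < β or α < -π < 2β < 0. If d(cos(x)) = -sin(x)·d(x) holds for all x ∈ (α, β), then d is a standard derivation. -/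
/-- If an additive function `d` derivates `cos` on `(α, β)` with `0 < 2α < π < β` or
`α < -π < 2β < 0`, then `d` is a standard derivation. -/
theorem stmt_14 (d : ℝ → ℝ) (hd : ∀ x y : ℝ, d (x + y) = d x + d y)
    (α β : ℝ)
    (hαβ : (0 < 2 * α ∧ 2 * α < Real.pi ∧ Real.pi < β) ∨
           (α < -Real.pi ∧ -Real.pi < 2 * β ∧ 2 * β < 0))
    (h : ∀ x ∈ Set.Ioo α β, d (Real.cos x) = -Real.sin x * d x) :
    ∀ x y : ℝ, d (x * y) = d x * y + x * d y := by
  have pi_pos := Real.pi_pos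
  -- basic additive facts
  have hd0 : d 0 = 0 := by have := hd 0 0; simp at this; linarith [hd 0 0]
  have hq : ∀ (q : ℚ) (x : ℝ), d (q * x) = q * d x := by
    intro q x
    let f : ℝ →+ ℝ := AddMonoidHom.mk' d hd
    have := map_ratCast_smul f ℝ ℝ q x
    simpa [f] using this
  -- d 1 = 0 using x = π or x = -π
  have h1 : d 1 = 0 := by
    have hneg : d (-1) = - d 1 := by
      have := hd 1 (-1); simp at this; linarith
    rcases hαβ with ⟨h1', h2', h3'⟩ | ⟨h1', h2', h3'⟩
    · have hπ : Real.pi ∈ Set.Ioo α β := ⟨by linarith, h3'⟩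
      have := h _ hπ
      rw [Real.cos_pi, Real.sin_pi] at this
      simp at this; linarith
    · have hπ : -Real.pi ∈ Set.Ioo α β := ⟨h1', by linarith⟩
      have := h _ hπ
      rw [Real.cos_neg, Real.cos_pi, Real.sin_neg, Real.sin_pi] at this
      simp at this; linarith
  -- key identity at cos x for good x
  have key0 : ∀ x, x ∈ Set.Ioo α β → 2 * x ∈ Set.Ioo α β →
      d (Real.cos x ^ 2) = 2 * Real.cos x * d (Real.cos x) := by
    intro x hx h2x
    have e1 := h x hx
    have e2 := h _ h2x
    have hdbl : d (2 * x) = 2 * d x := by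
      have h2 : (2:ℝ) * x = x + x := by ring
      rw [h2, hd x x]; ring
    have hsplit : d (Real.cos (2 * x)) = 2 * d (Real.cos x ^ 2) - d 1 := by
      rw [Real.cos_two_mul]
      have ha : (2 : ℝ) * Real.cos x ^ 2 - 1 = Real.cos x ^ 2 + (Real.cos x ^ 2 + (-1)) := by ring
      have hneg : d (-1) = - d 1 := by have := hd 1 (-1); simp at this; linarith
      rw [ha, hd, hd, hneg]; ring
    rw [e2, hdbl, Real.sin_two_mul] at hsplit
    rw [e1]
    rw [h1] at hsplit
    nlinarith [hsplit]
  -- small interval around 0 where d(s^2) = 2 s d s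
  have small : ∃ lo hi : ℝ, lo < 0 ∧ 0 < hi ∧
      ∀ s ∈ Set.Ioo lo hi, d (s ^ 2) = 2 * s * d s := by
    rcases hαβ with ⟨h1', h2', h3'⟩ | ⟨h1', h2', h3'⟩
    · -- case 1 : 0 < 2α < π < β ; use J = Ioo α b, b = min (β/2) π
      set b := min (β / 2) Real.pi with hb
      have hα0 : 0 < α := by linarith
      have hαπ2 : α < Real.pi / 2 := by linarith
      have hb2 : Real.pi / 2 < b := by
        apply lt_min <;> linarith
      have hab : α < b := by linarith
      have hbπ : b ≤ Real.pi := min_le_right _ _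
      have hcb : Real.cos b < 0 := by
        rcases lt_or_eq_of_le hbπ with hlt | heq
        · exact Real.cos_neg_of_pi_div_two_lt_of_lt hb2 (by linarith)
        · rw [heq, Real.cos_pi]; norm_num
      have hca : 0 < Real.cos α := Real.cos_pos_of_mem_Ioo ⟨by linarith, hαπ2⟩
      have hsub : Set.Ioo (Real.cos b) (Real.cos α) ⊆ Real.cos '' Set.Ioo α b :=
        intermediate_value_Ioo' (le_of_lt hab) Real.continuous_cos.continuousOn
      refine ⟨Real.cos b, Real.cos α, hcb, hca, ?_⟩
      intro s hs
      obtain ⟨x, hxJ, hxs⟩ := hsub hs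
      have hx1 : x ∈ Set.Ioo α β := ⟨hxJ.1, by
        have := hxJ.2; have : x < Real.pi := lt_of_lt_of_le hxJ.2 hbπ; linarith⟩
      have hx2 : 2 * x ∈ Set.Ioo α β := by
        constructor
        · have : α < x := hxJ.1; linarith
        · have : x < β / 2 := lt_of_lt_of_le hxJ.2 (min_le_left _ _); linarith
      have := key0 x hx1 hx2
      rw [hxs] at this; exact this
    · -- case 2 : α < -π < 2β < 0 ; use J = Ioo a β, a = max (α/2) (-π)
      set a := max (α / 2) (-Real.pi) with ha
      have hβ0 : β < 0 := by linarith
      have hβπ2 : -Real.pi / 2 < β := by linarith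
      have ha2 : a < -Real.pi / 2 := by
        apply max_lt <;> linarith
      have hab : a < β := by linarith
      have haπ : -Real.pi ≤ a := le_max_right _ _
      have hca : Real.cos a < 0 := by
        rcases lt_or_eq_of_le haπ with hlt | heq
        · rw [← Real.cos_neg]
          apply Real.cos_neg_of_pi_div_two_lt_of_lt <;> linarith
        · rw [← heq, Real.cos_neg, Real.cos_pi]; norm_num
      have hcb : 0 < Real.cos β := Real.cos_pos_of_mem_Ioo ⟨by linarith, by linarith⟩
      have hsub : Set.Ioo (Real.cos a) (Real.cos β) ⊆ Real.cos '' Set.Ioo a β :=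
        intermediate_value_Ioo (le_of_lt hab) Real.continuous_cos.continuousOn
      refine ⟨Real.cos a, Real.cos β, hca, hcb, ?_⟩
      intro s hs
      obtain ⟨x, hxJ, hxs⟩ := hsub hs
      have hxneg : x < 0 := by have := hxJ.2; linarith
      have hx1 : x ∈ Set.Ioo α β := ⟨by
        have h' : α / 2 ≤ a := le_max_left _ _
        have := hxJ.1; linarith, hxJ.2⟩
      have hx2 : 2 * x ∈ Set.Ioo α β := by
        constructor
        · have h' : α / 2 ≤ a := le_max_left _ _
          have := hxJ.1; linarith
        · have := hxJ.2; linarith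
      have := key0 x hx1 hx2
      rw [hxs] at this; exact this
  -- d (t^2) = 2 t d t for all t
  have key : ∀ t : ℝ, d (t ^ 2) = 2 * t * d t := by
    obtain ⟨lo, hi, hlo, hhi, hsm⟩ := small
    intro t
    rcases eq_or_ne t 0 with rfl | ht
    · simp [hd0]
    · have habs : 0 < |t| := abs_pos.mpr ht
      have hm : 0 < min hi (-lo) := lt_min hhi (by linarith)
      obtain ⟨q, hq0, hq1⟩ := exists_rat_btwn (div_pos hm habs)
      have hq0' : (0 : ℝ) < q := hq0
      have hsmall : |(q : ℝ) * t| < min hi (-lo) := by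
        rw [abs_mul, abs_of_pos hq0']
        calc (q : ℝ) * |t| < (min hi (-lo) / |t|) * |t| := by
              apply mul_lt_mul_of_pos_right hq1 habs
          _ = min hi (-lo) := by field_simp
      have hmem : (q : ℝ) * t ∈ Set.Ioo lo hi := by
        rw [abs_lt] at hsmall
        constructor
        · have := hsmall.1; have h2 : min hi (-lo) ≤ -lo := min_le_right _ _; linarith
        · have := hsmall.2; have h2 : min hi (-lo) ≤ hi := min_le_left _ _; linarith
      have := hsm _ hmem
      have hL : d (((q : ℝ) * t) ^ 2) = (q : ℝ) ^ 2 * d (t ^ 2) := by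
        have : ((q : ℝ) * t) ^ 2 = ((q ^ 2 : ℚ) : ℝ) * t ^ 2 := by push_cast; ring
        rw [this, hq]; push_cast; ring
      have hR : d ((q : ℝ) * t) = (q : ℝ) * d t := hq q t
      rw [hL, hR] at this
      have hq2 : (q : ℝ) ^ 2 ≠ 0 := pow_ne_zero 2 (ne_of_gt hq0')
      have : (q : ℝ) ^ 2 * d (t ^ 2) = (q : ℝ) ^ 2 * (2 * t * d t) := by
        rw [this]; ring
      exact mul_left_cancel₀ hq2 this
  -- polarization
  intro x y
  have e1 := key x
  have e2 := key y
  have e3 := key (x + y)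
  have hsum : d (x + y) = d x + d y := hd x y
  have hexp : d ((x + y) ^ 2) = d (x ^ 2) + 2 * d (x * y) + d (y ^ 2) := by
    have ha : (x + y) ^ 2 = x ^ 2 + (x * y + (x * y + y ^ 2)) := by ring
    rw [ha, hd, hd, hd]; ring
  rw [hexp, e1, e2, hsum] at e3
  nlinarith [e3]
end

section
/- Let d : ℝ → ℝ be an additive function, let P be a nonzero polynomial with rational coefficients, and let I be a nonempty open interval of ℝ. Then d(P(x)) = P'(x)·d(x) holds for all x ∈ I if and only if one of the following holds: (i) deg(P) = 0 and d(1) = 0; (ii) deg(P) = 1 and P(0)·d(1) = 0; (iii) deg(P) ≥ 2 and d is a standard derivation. -/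
open Polynomial Set

lemma dq_mul {d : ℝ → ℝ} (hd : ∀ x y : ℝ, d (x + y) = d x + d y) (q : ℚ) (y : ℝ) :
    d ((q : ℝ) * y) = q * d y := by
  have := map_smul ((AddMonoidHom.mk' d hd).toRatLinearMap) q y
  simpa [Rat.smul_def] using this

lemma d_zero {d : ℝ → ℝ} (hd : ∀ x y : ℝ, d (x + y) = d x + d y) : d 0 = 0 := by
  have := hd 0 0; simp at this; linarith

lemma eval_deg2 (S : ℝ[X]) (h : S.natDegree ≤ 2) (x : ℝ) :
    S.eval x = S.coeff 0 + S.coeff 1 * x + S.coeff 2 * x ^ 2 := by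
  rw [Polynomial.eval_eq_sum_range' (lt_of_le_of_lt h (by norm_num : (2:ℕ) < 3))]
  rw [Finset.sum_range_succ, Finset.sum_range_succ, Finset.sum_range_succ]
  simp

lemma taylor_coeff_eval (S : ℝ[X]) (x : ℝ) (k : ℕ) (h : S.natDegree ≤ k + 2) :
    (Polynomial.taylor x S).coeff k =
      S.coeff k + ((1+k).choose k : ℝ) * S.coeff (1+k) * x
        + ((2+k).choose k : ℝ) * S.coeff (2+k) * x ^ 2 := by
  rw [Polynomial.taylor_coeff, eval_deg2 _ (le_trans (Polynomial.natDegree_hasseDeriv_le S k) (by omega)),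
    Polynomial.hasseDeriv_coeff, Polynomial.hasseDeriv_coeff, Polynomial.hasseDeriv_coeff]
  push_cast
  ring_nf
  simp [Nat.choose_self]

lemma key_lemma {d : ℝ → ℝ} (hd : ∀ x y : ℝ, d (x + y) = d x + d y)
    (P : Polynomial ℚ) (hP : P ≠ 0) (a b : ℝ) (hab : a < b)
    (H : ∀ x ∈ Set.Ioo a b,
        d (Polynomial.aeval x P) = Polynomial.aeval x (Polynomial.derivative P) * d x)
    (m : ℕ) (hm : P.natDegree = m + 2) :
    d 1 = 0 ∧ ∀ x ∈ Set.Ioo a b, d (x ^ 2) = 2 * x * d x := by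
  classical
  set R : ℝ[X] := P.map (algebraMap ℚ ℝ) with hR
  have hinj : Function.Injective (algebraMap ℚ ℝ) := (algebraMap ℚ ℝ).injective
  have hdegR : R.natDegree = m + 2 := by
    rw [hR, Polynomial.natDegree_map_eq_of_injective hinj, hm]
  have hRc : ∀ j, R.coeff j = ((P.coeff j : ℚ) : ℝ) := by
    intro j; simp [hR, Polynomial.coeff_map]
  have hRc' : ∀ j, (Polynomial.derivative R).coeff j = ((P.coeff (j+1) : ℚ) : ℝ) * (j+1) := by
    intro j
    rw [Polynomial.coeff_derivative, hRc]
  have htop : P.coeff (m+3) = 0 := Polynomial.coeff_eq_zero_of_natDegree_lt (by omega)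
  have hlc : P.coeff (m+2) ≠ 0 := by
    rw [← hm]; exact fun h => hP (Polynomial.leadingCoeff_eq_zero.mp h)
  have hdq : ∀ (q : ℚ) (y : ℝ), d ((q:ℝ) * y) = q * d y := dq_mul hd
  have H' : ∀ x ∈ Set.Ioo a b, d (R.eval x) = (Polynomial.derivative R).eval x * d x := by
    intro x hx
    have e1 : Polynomial.aeval x P = R.eval x := by
      rw [hR, Polynomial.eval_map, Polynomial.aeval_def]
    have e2 : Polynomial.aeval x (Polynomial.derivative P) = (Polynomial.derivative R).eval x := by
      rw [hR, Polynomial.derivative_map, Polynomial.eval_map, Polynomial.aeval_def]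
    rw [← e1, ← e2]; exact H x hx
  -- the main polynomial identity
  have main : ∀ x ∈ Set.Ioo a b,
      (∑ j ∈ Finset.range (m+3),
          Polynomial.C (d ((Polynomial.taylor x R).coeff j)) * Polynomial.X ^ j) =
        Polynomial.taylor x (Polynomial.derivative R) *
          (Polynomial.C (d x) + Polynomial.C (d 1) * Polynomial.X) := by
    intro x hx
    apply Polynomial.eq_of_infinite_eval_eq
    -- pointwise claim
    have hpt : ∀ q : ℚ, x + (q:ℝ) ∈ Set.Ioo a b →
        Polynomial.eval (q:ℝ) (∑ j ∈ Finset.range (m+3),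
          Polynomial.C (d ((Polynomial.taylor x R).coeff j)) * Polynomial.X ^ j) =
        Polynomial.eval (q:ℝ) (Polynomial.taylor x (Polynomial.derivative R) *
          (Polynomial.C (d x) + Polynomial.C (d 1) * Polynomial.X)) := by
      intro q hq
      have h1 := H' _ hq
      have hdxq : d (x + (q:ℝ)) = d x + q * d 1 := by
        rw [hd, show d ((q:ℝ)) = q * d 1 by simpa using hdq q 1]
      have hlt : (Polynomial.taylor x R).natDegree < m + 3 := by
        rw [Polynomial.natDegree_taylor, hdegR]; omega
      have hev : R.eval (x + (q:ℝ)) =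
          ∑ i ∈ Finset.range (m+3), (Polynomial.taylor x R).coeff i * (q:ℝ)^i := by
        rw [show x + (q:ℝ) = (q:ℝ) + x by ring, ← Polynomial.taylor_eval,
          Polynomial.eval_eq_sum_range' hlt]
      have hdsum : d (∑ i ∈ Finset.range (m+3), (Polynomial.taylor x R).coeff i * (q:ℝ)^i) =
          ∑ i ∈ Finset.range (m+3), d ((Polynomial.taylor x R).coeff i) * (q:ℝ)^i := by
        have h0 : d (∑ i ∈ Finset.range (m+3), (Polynomial.taylor x R).coeff i * (q:ℝ)^i) =
            ∑ i ∈ Finset.range (m+3), d ((Polynomial.taylor x R).coeff i * (q:ℝ)^i) :=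
          map_sum (AddMonoidHom.mk' d hd) _ _
        rw [h0]
        refine Finset.sum_congr rfl fun i _ => ?_
        rw [mul_comm, show ((q:ℝ)^i) = (((q^i : ℚ)):ℝ) by push_cast; ring, hdq]
        push_cast; ring
      have hevd : (Polynomial.derivative R).eval (x + (q:ℝ)) =
          (Polynomial.taylor x (Polynomial.derivative R)).eval (q:ℝ) := by
        rw [Polynomial.taylor_eval]; ring_nf
      calc Polynomial.eval (q:ℝ) (∑ j ∈ Finset.range (m+3),
              Polynomial.C (d ((Polynomial.taylor x R).coeff j)) * Polynomial.X ^ j)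
          = ∑ i ∈ Finset.range (m+3), d ((Polynomial.taylor x R).coeff i) * (q:ℝ)^i := by
            simp [Polynomial.eval_finset_sum]
        _ = d (R.eval (x + (q:ℝ))) := by rw [hev, hdsum]
        _ = (Polynomial.derivative R).eval (x + (q:ℝ)) * d (x + (q:ℝ)) := h1
        _ = _ := by
            rw [hevd, hdxq]
            simp only [Polynomial.eval_mul, Polynomial.eval_add, Polynomial.eval_C,
              Polynomial.eval_X]
            ring
    -- infinitude
    obtain ⟨r, hr0, hrb⟩ := exists_rat_btwn (show (0:ℝ) < b - x from sub_pos.2 hx.2)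
    have hrpos : 0 < r := by exact_mod_cast hr0
    refine Set.infinite_of_injective_forall_mem
      (f := fun k : ℕ => ((r / (k+1) : ℚ) : ℝ)) ?_ ?_
    · intro i j hij
      have h1 : r / ((i:ℕ)+1 : ℚ) = r / ((j:ℕ)+1 : ℚ) := Rat.cast_injective hij
      push_cast at h1
      have h2 := (div_eq_div_iff (by positivity) (by positivity)).mp h1
      have h3 : ((j:ℚ)+1) = ((i:ℚ)+1) := mul_left_cancel₀ (ne_of_gt hrpos)
        (by linarith [h2] )
      have : (j:ℚ) = i := by linarith
      exact_mod_cast this.symm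
    · intro k
      have hqpos : (0:ℚ) < r / (k+1) := by positivity
      have hqle : (r / (k+1) : ℚ) ≤ r := by
        apply div_le_self hrpos.le; exact_mod_cast Nat.le_add_left 1 k
      have hc1 : (0:ℝ) < ((r / (k+1) : ℚ) : ℝ) := by exact_mod_cast hqpos
      have hc2 : ((r / (k+1) : ℚ) : ℝ) ≤ (r:ℝ) := by exact_mod_cast hqle
      exact hpt _ ⟨by linarith [hx.1], by linarith [hrb]⟩
  -- coefficient extraction
  have hcoeffA : ∀ (x:ℝ) (k:ℕ), k < m+3 →
      (∑ j ∈ Finset.range (m+3),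
          Polynomial.C (d ((Polynomial.taylor x R).coeff j)) * Polynomial.X ^ j).coeff k =
        d ((Polynomial.taylor x R).coeff k) := by
    intro x k hk
    rw [Polynomial.finset_sum_coeff, Finset.sum_eq_single k]
    · simp
    · intro j _ hjk
      simp [Polynomial.coeff_C_mul, Polynomial.coeff_X_pow, Ne.symm hjk]
    · intro hk'; exact absurd (Finset.mem_range.2 hk) hk'
  have htopj : ∀ j, m+3 ≤ j → P.coeff j = 0 := fun j hj =>
    Polynomial.coeff_eq_zero_of_natDegree_lt (by omega)
  have hdR : (Polynomial.derivative R).natDegree ≤ m + 1 := by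
    have := Polynomial.natDegree_derivative_le R
    omega
  have hch1 : (1+m).choose m = m+1 := by
    rw [Nat.add_comm]; exact Nat.choose_succ_self_right m
  have hch2 : (2+m).choose m * 2 = (m+2)*(m+1) := by
    have h1 : (2+m).choose m = (m+2).choose 2 := by
      rw [Nat.add_comm, show m = (m+2)-2 from by omega]
      exact Nat.choose_symm (by omega)
    rw [h1, Nat.choose_two_right, show (m+2) - 1 = m+1 from by omega]
    exact Nat.div_mul_cancel (by simpa [Nat.mul_comm] using (Nat.even_mul_succ_self (m+1)).two_dvd)
  have hcast : ∀ q : ℚ, d ((q:ℝ)) = q * d 1 := fun q => by simpa using hdq q 1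
  -- Step 1 : d 1 = 0
  have hd1 : d 1 = 0 := by
    have hx0 : (a+b)/2 ∈ Set.Ioo a b := ⟨by linarith, by linarith⟩
    set x : ℝ := (a+b)/2
    have hAB := main x hx0
    have heq : (∑ j ∈ Finset.range (m+3),
          Polynomial.C (d ((Polynomial.taylor x R).coeff j)) * Polynomial.X ^ j).coeff (m+2) =
        (Polynomial.taylor x (Polynomial.derivative R) *
          (Polynomial.C (d x) + Polynomial.C (d 1) * Polynomial.X)).coeff (m+2) := by
      rw [hAB]
    rw [hcoeffA x (m+2) (by omega)] at heq
    -- LHS value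
    have hTL : (Polynomial.taylor x R).coeff (m+2) = ((P.coeff (m+2) : ℚ) : ℝ) := by
      rw [taylor_coeff_eval R x (m+2) (by omega), hRc, hRc, hRc,
        htopj (1+(m+2)) (by omega), htopj (2+(m+2)) (by omega)]
      push_cast; ring
    -- RHS value
    have hBc : (Polynomial.taylor x (Polynomial.derivative R) *
          (Polynomial.C (d x) + Polynomial.C (d 1) * Polynomial.X)).coeff (m+2) =
        (Polynomial.taylor x (Polynomial.derivative R)).coeff (m+2) * d x +
        (Polynomial.taylor x (Polynomial.derivative R)).coeff (m+1) * d 1 := by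
      rw [mul_add, Polynomial.coeff_add, Polynomial.coeff_mul_C,
        show Polynomial.taylor x (Polynomial.derivative R) * (Polynomial.C (d 1) * Polynomial.X)
          = (Polynomial.taylor x (Polynomial.derivative R) * Polynomial.C (d 1)) * Polynomial.X
          from by ring,
        show m+2 = (m+1)+1 from rfl, Polynomial.coeff_mul_X, Polynomial.coeff_mul_C]
    have hT2 : (Polynomial.taylor x (Polynomial.derivative R)).coeff (m+2) = 0 := by
      rw [taylor_coeff_eval _ x (m+2) (by omega), hRc', hRc', hRc',
        htopj (m+2+1) (by omega), htopj (1+(m+2)+1) (by omega), htopj (2+(m+2)+1) (by omega)]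
      simp
    have hT1 : (Polynomial.taylor x (Polynomial.derivative R)).coeff (m+1) =
        ((P.coeff (m+2) : ℚ) : ℝ) * (m+2) := by
      rw [taylor_coeff_eval _ x (m+1) (by omega), hRc', hRc', hRc',
        htopj (1+(m+1)+1) (by omega), htopj (2+(m+1)+1) (by omega)]
      push_cast; ring
    rw [hBc, hT2, hT1, hTL, hcast] at heq
    have h5 : ((P.coeff (m+2) : ℝ)) * (((m:ℝ)+1) * d 1) = 0 := by
      push_cast at heq ⊢; linear_combination -heq
    have hc0 : ((P.coeff (m+2) : ℚ) : ℝ) ≠ 0 := by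
      exact_mod_cast hlc
    rcases mul_eq_zero.mp h5 with h | h
    · exact absurd h hc0
    rcases mul_eq_zero.mp h with h | h
    · exact absurd h (by positivity)
    · exact h
  refine ⟨hd1, ?_⟩
  -- Step 2 : d (x^2) = 2 x d x on the interval
  intro x hx
  have hAB := main x hx
  rw [hd1, Polynomial.C_0, zero_mul, add_zero] at hAB
  have heq : (∑ j ∈ Finset.range (m+3),
        Polynomial.C (d ((Polynomial.taylor x R).coeff j)) * Polynomial.X ^ j).coeff m =
      (Polynomial.taylor x (Polynomial.derivative R) * Polynomial.C (d x)).coeff m := by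
    rw [hAB]
  rw [hcoeffA x m (by omega), Polynomial.coeff_mul_C] at heq
  -- LHS : d of the taylor coefficient
  set q1 : ℚ := ((1+m).choose m : ℚ) * P.coeff (1+m) with hq1
  set q2 : ℚ := ((2+m).choose m : ℚ) * P.coeff (2+m) with hq2
  have hTm : (Polynomial.taylor x R).coeff m =
      ((P.coeff m : ℚ) : ℝ) + ((q1 : ℝ) * x + (q2:ℝ) * x^2) := by
    rw [taylor_coeff_eval R x m (by omega), hRc, hRc, hRc, hq1, hq2]
    push_cast; ring
  have hdTm : d ((Polynomial.taylor x R).coeff m) =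
      (q1:ℝ) * d x + (q2:ℝ) * d (x^2) := by
    rw [hTm, hd, hd, hcast, hd1, mul_zero,
      show (q1:ℝ) * x = ((q1:ℚ):ℝ) * x from rfl, hdq,
      show (q2:ℝ) * x^2 = ((q2:ℚ):ℝ) * x^2 from rfl, hdq]
    ring
  -- RHS : taylor coefficient of the derivative
  have hTm' : (Polynomial.taylor x (Polynomial.derivative R)).coeff m =
      ((P.coeff (m+1) : ℚ) : ℝ) * (m+1) +
        ((1+m).choose m : ℝ) * (((P.coeff (m+2) : ℚ) : ℝ) * (m+2)) * x := by
    rw [taylor_coeff_eval _ x m (by omega), hRc', hRc', hRc',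
      htopj (2+m+1) (by omega)]
    push_cast; ring
  rw [hdTm, hTm'] at heq
  -- final arithmetic
  have hch1' : (m+1).choose m = m+1 := by rwa [Nat.add_comm 1 m] at hch1
  have hch2' : (m+2).choose m * 2 = (m+2)*(m+1) := by rwa [Nat.add_comm 2 m] at hch2
  have hc0 : ((P.coeff (m+2) : ℚ) : ℝ) ≠ 0 := by exact_mod_cast hlc
  have hχ2 : ((m+2).choose m : ℝ) * 2 = ((m:ℝ)+2)*((m:ℝ)+1) := by
    exact_mod_cast congrArg (Nat.cast : ℕ → ℝ) hch2'
  have hkey : (((m+2).choose m : ℝ) * ((P.coeff (m+2) : ℚ) : ℝ)) * d (x^2) =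
      (((m+2).choose m : ℝ) * ((P.coeff (m+2) : ℚ) : ℝ)) * (2 * x * d x) := by
    rw [hq1, hq2, show (1:ℕ)+m = m+1 from by omega, show (2:ℕ)+m = m+2 from by omega] at heq
    push_cast at heq
    rw [show (((m+1)).choose m : ℝ) = ((m:ℝ)+1) from by
      exact_mod_cast congrArg (Nat.cast : ℕ → ℝ) hch1'] at heq
    linear_combination heq - (((P.coeff (m+2):ℚ):ℝ) * x * d x) * hχ2
  have hχ2pos : (0:ℝ) < ((m+2).choose m : ℝ) := by
    exact_mod_cast Nat.choose_pos (by omega : m ≤ m+2)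
  exact mul_left_cancel₀ (by positivity) hkey

/-- Characterization of additive functions `d` derivating a nonzero polynomial `P` with
rational coefficients on a nonempty open interval `I`. -/
theorem stmt_19 (d : ℝ → ℝ) (hd : ∀ x y : ℝ, d (x + y) = d x + d y)
    (P : Polynomial ℚ) (hP : P ≠ 0) (a b : ℝ) (hab : a < b) :
    (∀ x ∈ Set.Ioo a b,
        d (Polynomial.aeval x P) = Polynomial.aeval x (Polynomial.derivative P) * d x) ↔
      ((P.natDegree = 0 ∧ d 1 = 0) ∨
       (P.natDegree = 1 ∧ (Polynomial.aeval (0 : ℝ) P) * d 1 = 0) ∨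
       (2 ≤ P.natDegree ∧ ∀ x y : ℝ, d (x * y) = d x * y + x * d y)) := by
  have hdq : ∀ (q : ℚ) (y : ℝ), d ((q:ℝ) * y) = q * d y := dq_mul hd
  have hcast : ∀ q : ℚ, d ((q:ℝ)) = q * d 1 := fun q => by simpa using hdq q 1
  have halg : ∀ q : ℚ, algebraMap ℚ ℝ q = (q:ℝ) := fun q => eq_ratCast _ q
  have hx0 : (a+b)/2 ∈ Set.Ioo a b := ⟨by linarith, by linarith⟩
  have haev1 : ∀ x : ℝ, P.natDegree = 1 →
      Polynomial.aeval x P = (P.coeff 1 : ℝ) * x + (P.coeff 0 : ℝ) ∧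
      Polynomial.aeval x (Polynomial.derivative P) = (P.coeff 1 : ℝ) := by
    intro x h1
    have hrep := Polynomial.eq_X_add_C_of_natDegree_le_one h1.le
    constructor
    · conv_lhs => rw [hrep]
      simp [halg]
    · conv_lhs => rw [hrep]
      simp [halg]
  constructor
  · intro H
    rcases Nat.lt_or_ge P.natDegree 2 with h2 | h2
    · rcases Nat.lt_or_ge P.natDegree 1 with h1 | h1
      · -- degree 0
        left
        have hdeg0 : P.natDegree = 0 := by omega
        refine ⟨hdeg0, ?_⟩
        obtain ⟨c, rfl⟩ := Polynomial.natDegree_eq_zero.mp hdeg0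
        have hc : c ≠ 0 := fun h => hP (by rw [h, Polynomial.C_0])
        have hH := H _ hx0
        simp [halg] at hH
        rw [hcast] at hH
        rcases mul_eq_zero.mp hH with h | h
        · exact absurd (by exact_mod_cast h) hc
        · exact h
      · -- degree 1
        right; left
        have hdeg1 : P.natDegree = 1 := by omega
        refine ⟨hdeg1, ?_⟩
        obtain ⟨e1, e2⟩ := haev1 ((a+b)/2) hdeg1
        have hH := H _ hx0
        rw [e1, e2, hd, hcast] at hH
        have h00 : Polynomial.aeval (0:ℝ) P = (P.coeff 0 : ℝ) := by
          rw [(haev1 0 hdeg1).1]; ring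
        rw [h00]
        have hq0 : ((P.coeff 1 : ℚ):ℝ) * d ((a+b)/2) = (P.coeff 1 : ℝ) * d ((a+b)/2) := rfl
        rw [show ((P.coeff 1 : ℚ):ℝ) * ((a+b)/2) = (P.coeff 1 : ℝ) * ((a+b)/2) from rfl,
          hdq] at hH
        linarith [hH]
    · right; right
      obtain ⟨m, hm⟩ : ∃ m, P.natDegree = m + 2 := ⟨P.natDegree - 2, by omega⟩
      obtain ⟨hd1, hsq⟩ := key_lemma hd P hP a b hab H m hm
      refine ⟨h2, ?_⟩
      have hsq' : ∀ y : ℝ, d (y^2) = 2 * y * d y := by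
        intro y
        obtain ⟨q, hq1, hq2⟩ := exists_rat_btwn (show a - y < b - y by linarith)
        have hy : y + (q:ℝ) ∈ Set.Ioo a b := ⟨by linarith, by linarith⟩
        have h := hsq _ hy
        have e1 : (y + (q:ℝ))^2 = y^2 + (((2*q:ℚ):ℝ) * y + ((q^2:ℚ):ℝ)) := by
          push_cast; ring
        rw [e1, hd, hd, hdq, hcast (q^2), hd1, mul_zero, add_zero,
          show d (y + (q:ℝ)) = d y + (q:ℚ) * d 1 from by rw [hd, hcast],
          hd1, mul_zero, add_zero] at h
        push_cast at h
        linear_combination h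
      intro u v
      have h := hsq' (u + v)
      have hu := hsq' u
      have hv := hsq' v
      have e : (u+v)^2 = u^2 + ((u*v + u*v) + v^2) := by ring
      rw [e, hd, hd, hd, hd u v] at h
      linear_combination h/2 - hu/2 - hv/2
  · rintro (⟨h0, hd1⟩ | ⟨h1, h10⟩ | ⟨h2, hleib⟩) x hx
    · obtain ⟨c, rfl⟩ := Polynomial.natDegree_eq_zero.mp h0
      simp [halg, hcast, hd1]
    · obtain ⟨e1, e2⟩ := haev1 x h1
      have h00 : Polynomial.aeval (0:ℝ) P = (P.coeff 0 : ℝ) := by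
        rw [(haev1 0 h1).1]; ring
      rw [h00] at h10
      rw [e1, e2, hd, hcast,
        show ((P.coeff 1 : ℚ):ℝ) * x = ((P.coeff 1 : ℚ):ℝ) * x from rfl, hdq]
      linarith [h10]
    · have hd1 : d 1 = 0 := by
        have := hleib 1 1
        simp at this
        linarith
      have hpow : ∀ (k:ℕ) (y:ℝ), d (y^k) = k * y^(k-1) * d y := by
        intro k
        induction k with
        | zero => intro y; simpa using hd1
        | succ n ih =>
          intro y
          rcases Nat.eq_zero_or_pos n with hn | hn
          · subst hn; simp
          rw [pow_succ, hleib, ih]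
          have hyy : y^(n-1) * y = y^n := by
            rw [← pow_succ]; congr 1; omega
          have : (n:ℝ) * y^(n-1) * d y * y = (n:ℝ) * y^n * d y := by
            rw [show (n:ℝ) * y^(n-1) * d y * y = (n:ℝ) * (y^(n-1) * y) * d y from by ring, hyy]
          rw [this, show n + 1 - 1 = n from rfl]
          push_cast
          ring
      have main : ∀ Q : Polynomial ℚ,
          d (Polynomial.aeval x Q) = Polynomial.aeval x (Polynomial.derivative Q) * d x := by
        intro Q
        induction Q using Polynomial.induction_on' with
        | add p q hp hq =>
          simp only [map_add, Polynomial.derivative_add]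
          rw [hd, hp, hq]; ring
        | monomial n c =>
          rw [Polynomial.aeval_monomial, Polynomial.derivative_monomial,
            Polynomial.aeval_monomial, halg, halg, hdq, hpow]
          push_cast
          ring
      exact main P
end
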